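/- arXiv:2507.13327 — 12 statements merged into one kernel-verified Lean document; each statement's English description precedes it below -/
import Mathlib

section
/- Let q ≥ 2, n ≥ 1 and 1 ≤ k ≤ n, and let D be a subset of (ℤ/qℤ)^n. Then D averages every real-valued eigenvector of the graph Laplacian L of the Hamming graph H(n,q) with eigenvalue qk — that is, for every φ : (ℤ/qℤ)^n → ℝ with Lφ = qk·φ one has q^n · ∑_{x∈D} φ(x) = |D| · ∑_{x∈(ℤ/qℤ)^n} φ(x) — if and only if ∑_{x∈D} χ_y(x) = 0 for every y ∈ (ℤ/qℤ)^n of Hamming weight exactly k. -/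
open Finset Matrix

/-- The Hamming graph `H(n,q)`: vertices are `(ℤ/qℤ)^n`, with an edge between
vertices at Hamming distance exactly `1` (i.e. differing in exactly one coordinate). -/
def hammingGraph (q n : ℕ) [NeZero q] : SimpleGraph (Fin n → ZMod q) where
  Adj x z := hammingDist x z = 1
  symm := ⟨fun x z h => Eq.trans (hammingDist_comm z x) h⟩
  loopless := ⟨fun x h => by simp [hammingDist_self] at h⟩

instance (q n : ℕ) [NeZero q] : DecidableRel (hammingGraph q n).Adj :=
  fun x z => inferInstanceAs (Decidable (hammingDist x z = 1))

/-!
The characters `χ_y x = ψ (y ⬝ᵥ x)`, for a primitive additive character `ψ` of `ZMod q`, are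
eigenvectors of the Laplacian of `H(n,q)` with eigenvalue `q |y|`: the graph is the Cayley graph
of `(ZMod q)^n` with the weight-one vectors as connection set.

If `D` averages the real eigenvectors for `q k`, it averages the real and imaginary parts of `χ_y`
for `|y| = k`, whose total sums vanish, so `∑_{x ∈ D} χ_y x = 0`. Conversely, a real eigenvector
`φ` for `q k ≠ 0` is orthogonal to the constants (eigenvalue `0`) and to every `χ_y` with
`|y| ≠ k`, so Fourier inversion expresses `∑_{x ∈ D} φ x` through the sums `∑_{x ∈ D} χ_y x`
with `|y| = k`.
-/

theorem hammingNorm_neg {ι : Type*} [Fintype ι] {β : ι → Type*} [∀ i, AddGroup (β i)]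
    [∀ i, DecidableEq (β i)] (x : ∀ i, β i) : hammingNorm (-x) = hammingNorm x :=
  hammingNorm_comp (fun _ => Neg.neg) (fun _ => neg_injective) (fun _ => neg_zero)

theorem hammingNorm_eq_one_iff {ι β : Type*} [Fintype ι] [DecidableEq ι] [Zero β] [DecidableEq β]
    {d : ι → β} : hammingNorm d = 1 ↔ ∃ i t, t ≠ 0 ∧ Pi.single i t = d := by
  constructor
  · intro h
    obtain ⟨i, hi⟩ := card_eq_one.mp h
    have hsupp : ∀ j, d j ≠ 0 ↔ j = i := fun j => by simpa using congr_arg (j ∈ ·) hi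
    refine ⟨i, d i, (hsupp i).2 rfl, funext fun j => ?_⟩
    by_cases hj : j = i
    · subst hj; simp
    · simpa [Pi.single_apply, hj, eq_comm] using mt (hsupp j).1 hj
  · rintro ⟨i, t, ht, rfl⟩
    refine card_eq_one.mpr ⟨i, ?_⟩
    ext j
    by_cases hj : j = i <;> simp [Pi.single_apply, hj, ht]

theorem sum_hammingNorm_eq_one {ι β M : Type*} [Fintype ι] [DecidableEq ι] [Fintype β] [Zero β]
    [DecidableEq β] [AddCommMonoid M] (f : (ι → β) → M) :
    ∑ d with hammingNorm d = 1, f d = ∑ i, ∑ t with t ≠ 0, f (Pi.single i t) := by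
  have himage : ({d | hammingNorm d = 1} : Finset (ι → β))
      = ((univ : Finset ι) ×ˢ ({t | t ≠ 0} : Finset β)).image fun p => Pi.single p.1 p.2 := by
    ext d
    simp [hammingNorm_eq_one_iff]
  rw [himage, sum_image, sum_product]
  rintro ⟨i, t⟩ ht ⟨j, s⟩ - h
  have hij : i = j := by
    by_contra hij
    simp only [coe_product, Set.mem_prod, mem_coe, mem_filter] at ht
    exact ht.2.2 (by simpa [Pi.single_apply, hij] using congr_fun h i)
  subst hij
  exact Prod.ext rfl (Pi.single_injective i h)

theorem Matrix.IsSymm.dotProduct_eq_zero_of_mulVec_eq_smul {ι R : Type*} [Fintype ι] [CommRing R]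
    [NoZeroDivisors R] {A : Matrix ι ι R} (hA : A.IsSymm) {u v : ι → R} {a b : R}
    (hu : A *ᵥ u = a • u) (hv : A *ᵥ v = b • v) (hab : a ≠ b) : u ⬝ᵥ v = 0 := by
  have h : a * (u ⬝ᵥ v) = b * (u ⬝ᵥ v) :=
    calc a * (u ⬝ᵥ v) = (A *ᵥ u) ⬝ᵥ v := by rw [hu, smul_dotProduct, smul_eq_mul]
      _ = u ⬝ᵥ (A *ᵥ v) := by rw [dotProduct_mulVec, ← vecMul_transpose, hA.eq]
      _ = b * (u ⬝ᵥ v) := by rw [hv, dotProduct_smul, smul_eq_mul]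
  exact (mul_eq_mul_right_iff.mp h).resolve_left hab

namespace SimpleGraph

section

variable {V : Type*} [Fintype V] [DecidableEq V] (G : SimpleGraph V) [DecidableRel G.Adj]

theorem lapMatrix_mulVec_comp {R S : Type*} [Ring R] [Ring S] (g : R →+ S) (f : V → R) :
    G.lapMatrix S *ᵥ (g ∘ f) = g ∘ (G.lapMatrix R *ᵥ f) := by
  ext v
  simp [lapMatrix_mulVec_apply, ← nsmul_eq_mul]

theorem lapMatrix_mulVec_comp_eq_natCast_smul {R S : Type*} [Ring R] [Ring S] (g : R →+ S)
    {f : V → R} {m : ℕ} (hf : G.lapMatrix R *ᵥ f = (m : R) • f) :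
    G.lapMatrix S *ᵥ (g ∘ f) = (m : S) • (g ∘ f) := by
  ext v
  simp [lapMatrix_mulVec_comp, hf, ← nsmul_eq_mul]

theorem sum_eq_zero_of_lapMatrix_mulVec_eq_smul {R : Type*} [CommRing R] [NoZeroDivisors R]
    {φ : V → R} {a : R} (hφ : G.lapMatrix R *ᵥ φ = a • φ) (ha : a ≠ 0) : ∑ v, φ v = 0 := by
  rw [← dotProduct_one]
  exact (G.isSymm_lapMatrix (R := R)).dotProduct_eq_zero_of_mulVec_eq_smul hφ (b := 0)
    (by rw [zero_smul]; exact G.lapMatrix_mulVec_const_eq_zero) ha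

theorem mul_sum_eq_of_forall_real_eigenvector {D : Finset V} {c d : ℝ} {m : ℕ}
    (h : ∀ φ : V → ℝ, G.lapMatrix ℝ *ᵥ φ = (m : ℝ) • φ → c * ∑ x ∈ D, φ x = d * ∑ x, φ x)
    {f : V → ℂ} (hf : G.lapMatrix ℂ *ᵥ f = (m : ℂ) • f) :
    (c : ℂ) * ∑ x ∈ D, f x = d * ∑ x, f x := by
  have hre := h _ (G.lapMatrix_mulVec_comp_eq_natCast_smul Complex.reAddGroupHom hf)
  have him := h _ (G.lapMatrix_mulVec_comp_eq_natCast_smul Complex.imAddGroupHom hf)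
  apply Complex.ext <;> simpa [Complex.re_sum, Complex.im_sum]

end

theorem lapMatrix_mulVec_addChar {A C : Type*} [AddCommGroup A] [Fintype A] [DecidableEq A]
    [CommRing C] (G : SimpleGraph A) [DecidableRel G.Adj] (S : Finset A)
    (hS : ∀ x z, G.Adj x z ↔ z - x ∈ S) (ψ : AddChar A C) :
    G.lapMatrix C *ᵥ ψ = (∑ s ∈ S, (1 - ψ s)) • ⇑ψ := by
  have hN : ∀ x, G.neighborFinset x = S.map (addLeftEmbedding x) := fun x => by
    ext z
    simp only [mem_neighborFinset, hS, mem_map, addLeftEmbedding_apply]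
    exact ⟨fun h => ⟨_, h, add_sub_cancel x z⟩, by rintro ⟨s, hs, rfl⟩; simpa using hs⟩
  ext x
  rw [lapMatrix_mulVec_apply, degree, hN, card_map, sum_map]
  simp [AddChar.map_add_eq_mul, mul_sub, sum_sub_distrib, mul_sum, mul_comm]

end SimpleGraph

namespace AddChar

variable {ι R C : Type*} [Fintype ι] [CommRing R]

def compDotProduct [CommMonoid C] (ψ : AddChar R C) (y : ι → R) : AddChar (ι → R) C where
  toFun x := ψ (y ⬝ᵥ x)
  map_zero_eq_one' := by simp
  map_add_eq_mul' a b := by simp [dotProduct_add, map_add_eq_mul]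

@[simp]
theorem compDotProduct_apply [CommMonoid C] (ψ : AddChar R C) (y x : ι → R) :
    ψ.compDotProduct y x = ψ (y ⬝ᵥ x) := rfl

theorem compDotProduct_eq_zero_iff [CommMonoid C] [DecidableEq ι] {ψ : AddChar R C}
    (hψ : ψ.IsPrimitive) {y : ι → R} : ψ.compDotProduct y = 0 ↔ y = 0 := by
  refine ⟨fun h => ?_, fun h => by ext; simp [h]⟩
  by_contra hy
  obtain ⟨i, hi⟩ := Function.ne_iff.mp hy
  obtain ⟨t, ht⟩ := ne_one_iff.mp (hψ hi)
  exact ht (by simpa [dotProduct_single] using DFunLike.congr_fun h (Pi.single i t))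

variable [DecidableEq ι] [Fintype R] [DecidableEq R] [CommRing C] [IsDomain C] {ψ : AddChar R C}

theorem sum_compDotProduct_apply (hψ : ψ.IsPrimitive) (v : ι → R) :
    ∑ y, ψ.compDotProduct y v = if v = 0 then (Fintype.card (ι → R) : C) else 0 := by
  classical
  simp_rw [compDotProduct_apply, dotProduct_comm _ v]
  simpa [compDotProduct_eq_zero_iff hψ] using sum_eq_ite (ψ.compDotProduct v)

theorem sum_compDotProduct_mul_dotProduct (hψ : ψ.IsPrimitive) (f : (ι → R) → C) (x : ι → R) :
    ∑ y, ψ.compDotProduct y x * (f ⬝ᵥ ψ.compDotProduct (-y)) = Fintype.card (ι → R) * f x := by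
  have h : ∀ y z, ψ.compDotProduct y x * ψ.compDotProduct (-y) z = ψ.compDotProduct y (x - z) :=
    fun y z => by
      rw [compDotProduct_apply, compDotProduct_apply, compDotProduct_apply, ← map_add_eq_mul]
      simp [sub_eq_add_neg]
  calc ∑ y, ψ.compDotProduct y x * (f ⬝ᵥ ψ.compDotProduct (-y))
      = ∑ z, f z * ∑ y, ψ.compDotProduct y (x - z) := by
        simp_rw [dotProduct, mul_sum, ← h]
        rw [sum_comm]
        exact sum_congr rfl fun z _ => sum_congr rfl fun y _ => by ring
    _ = Fintype.card (ι → R) * f x := by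
        simp_rw [sum_compDotProduct_apply hψ]
        simp [sub_eq_zero, mul_comm]

theorem card_mul_sum_eq_sum_sum_mul_dotProduct (hψ : ψ.IsPrimitive) (f : (ι → R) → C)
    (D : Finset (ι → R)) :
    Fintype.card (ι → R) * ∑ x ∈ D, f x
      = ∑ y, (∑ x ∈ D, ψ.compDotProduct y x) * (f ⬝ᵥ ψ.compDotProduct (-y)) := by
  simp_rw [mul_sum, ← sum_compDotProduct_mul_dotProduct hψ, sum_mul]
  exact sum_comm

theorem sum_hammingNorm_eq_one_one_sub_compDotProduct (hψ : ψ.IsPrimitive) (y : ι → R) :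
    ∑ d with hammingNorm d = 1, (1 - ψ.compDotProduct y d) = Fintype.card R * hammingNorm y := by
  have hcoord : ∀ a : R,
      ∑ t with t ≠ 0, (1 - ψ (a * t)) = if a ≠ 0 then (Fintype.card R : C) else 0 := fun a => by
    classical
    have hshift : ψ.mulShift a = 0 ↔ a = 0 :=
      ⟨fun h => by_contra fun ha => hψ ha h, fun ha => ha ▸ mulShift_zero ψ⟩
    have hsum := sum_eq_ite (ψ.mulShift a)
    simp only [mulShift_apply, hshift] at hsum
    rw [sum_filter_of_ne fun t _ h => by rintro rfl; simp at h, sum_sub_distrib, hsum]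
    split_ifs <;> simp_all
  simp only [sum_hammingNorm_eq_one, compDotProduct_apply, dotProduct_single, hcoord]
  rw [← sum_filter, sum_const, nsmul_eq_mul, mul_comm]
  rfl

end AddChar

section Hamming

variable {q n : ℕ} [NeZero q] {C : Type*} [CommRing C] [IsDomain C] {ψ : AddChar (ZMod q) C}

theorem hammingGraph_adj_iff {x z : Fin n → ZMod q} :
    (hammingGraph q n).Adj x z ↔ hammingNorm (z - x) = 1 := by
  rw [← neg_add_eq_sub, ← hammingDist_eq_hammingNorm]
  rfl

theorem hammingGraph_lapMatrix_mulVec_compDotProduct (hψ : ψ.IsPrimitive) (y : Fin n → ZMod q) :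
    (hammingGraph q n).lapMatrix C *ᵥ ψ.compDotProduct y
      = ((q * hammingNorm y : ℕ) : C) • ⇑(ψ.compDotProduct y) := by
  rw [SimpleGraph.lapMatrix_mulVec_addChar _ {d | hammingNorm d = 1}
    (fun x z => by simp [hammingGraph_adj_iff]),
    AddChar.sum_hammingNorm_eq_one_one_sub_compDotProduct hψ, ZMod.card, Nat.cast_mul]

theorem hammingGraph_sum_eq_zero_of_lapMatrix_mulVec_eq_smul [CharZero C] (hψ : ψ.IsPrimitive)
    {k : ℕ} {D : Finset (Fin n → ZMod q)}
    (hD : ∀ y, hammingNorm y = k → ∑ x ∈ D, ψ.compDotProduct y x = 0)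
    {f : (Fin n → ZMod q) → C} (hf : (hammingGraph q n).lapMatrix C *ᵥ f = ((q * k : ℕ) : C) • f) :
    ∑ x ∈ D, f x = 0 := by
  have hcoef : ∀ y, hammingNorm y ≠ k → f ⬝ᵥ ψ.compDotProduct (-y) = 0 := fun y hy =>
    ((hammingGraph q n).isSymm_lapMatrix (R := C)).dotProduct_eq_zero_of_mulVec_eq_smul hf
      (hammingGraph_lapMatrix_mulVec_compDotProduct hψ (-y))
      (by rw [hammingNorm_neg, Ne, Nat.cast_inj, Nat.mul_left_cancel_iff (NeZero.pos q)]
          exact Ne.symm hy)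
  have hsum : (Fintype.card (Fin n → ZMod q) : C) * ∑ x ∈ D, f x = 0 := by
    rw [AddChar.card_mul_sum_eq_sum_sum_mul_dotProduct hψ]
    refine sum_eq_zero fun y _ => ?_
    by_cases hy : hammingNorm y = k
    · rw [hD y hy, zero_mul]
    · rw [hcoef y hy, mul_zero]
  simpa [NeZero.ne q] using hsum

end Hamming

theorem hamming_design_real_eigvecs_iff_chars_general
    (q n k : ℕ) [NeZero q] (hk1 : 1 ≤ k)
    (ω : ℂ) (hω : IsPrimitiveRoot ω q) (D : Finset (Fin n → ZMod q)) :
    (∀ φ : (Fin n → ZMod q) → ℝ,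
        (hammingGraph q n).lapMatrix ℝ *ᵥ φ = (((q * k : ℕ) : ℝ)) • φ →
        (q : ℝ) ^ n * ∑ x ∈ D, φ x = (D.card : ℝ) * ∑ x, φ x) ↔
      (∀ y : Fin n → ZMod q, hammingNorm y = k →
        ∑ x ∈ D, ω ^ (∑ i, y i * x i).val = 0) := by
  set ψ := AddChar.zmodChar q hω.pow_eq_one
  have hψ : ψ.IsPrimitive := AddChar.zmodChar_primitive_of_primitive_root q hω
  change _ ↔ ∀ y : Fin n → ZMod q, hammingNorm y = k → ∑ x ∈ D, ψ.compDotProduct y x = 0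
  constructor
  · intro h y hy
    have hχ := hammingGraph_lapMatrix_mulVec_compDotProduct hψ y
    rw [hy] at hχ
    have hχ0 : ψ.compDotProduct y ≠ 0 :=
      (AddChar.compDotProduct_eq_zero_iff hψ).not.2 (hammingNorm_pos_iff.1 (by omega))
    have hav := SimpleGraph.mul_sum_eq_of_forall_real_eigenvector _ h hχ
    rw [AddChar.sum_eq_zero_iff_ne_zero.2 hχ0, mul_zero] at hav
    simpa [NeZero.ne q] using hav
  · intro h φ hφ
    have hφD : ∑ x ∈ D, (φ x : ℂ) = 0 := hammingGraph_sum_eq_zero_of_lapMatrix_mulVec_eq_smul hψ h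
      (SimpleGraph.lapMatrix_mulVec_comp_eq_natCast_smul _ Complex.ofRealHom.toAddMonoidHom hφ)
    rw [SimpleGraph.sum_eq_zero_of_lapMatrix_mulVec_eq_smul _ hφ (by simp [NeZero.ne q]; omega),
      (by exact_mod_cast hφD : ∑ x ∈ D, φ x = 0), mul_zero, mul_zero]

/-- A subset `D ⊆ (ℤ/qℤ)^n` averages every real eigenvector of the graph Laplacian of
the Hamming graph `H(n,q)` with eigenvalue `q·k` if and only if
`∑_{x ∈ D} χ_y(x) = 0` for every `y` of Hamming weight exactly `k`, where
`χ_y(x) = ω^{y·x}` for a fixed primitive `q`-th root of unity `ω`. -/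
theorem hamming_design_real_eigvecs_iff_chars
    (q n k : ℕ) [NeZero q] (hq : 2 ≤ q) (hn : 1 ≤ n) (hk1 : 1 ≤ k) (hkn : k ≤ n)
    (ω : ℂ) (hω : IsPrimitiveRoot ω q) (D : Finset (Fin n → ZMod q)) :
    (∀ φ : (Fin n → ZMod q) → ℝ,
        (hammingGraph q n).lapMatrix ℝ *ᵥ φ = (((q * k : ℕ) : ℝ)) • φ →
        (q : ℝ) ^ n * ∑ x ∈ D, φ x = (D.card : ℝ) * ∑ x, φ x) ↔
      (∀ y : Fin n → ZMod q, hammingNorm y = k →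
        ∑ x ∈ D, ω ^ (∑ i, y i * x i).val = 0) :=
  hamming_design_real_eigvecs_iff_chars_general q n k hk1 ω hω D
end

section
/- Let q ≥ 2 and 1 ≤ t ≤ n, and let D be a subset of (ℤ/qℤ)^n. Then ∑_{x∈D} χ_y(x) = 0 for every y ∈ (ℤ/qℤ)^n with 1 ≤ |y| ≤ t if and only if D is an orthogonal array with parameters (t,n,q): for every t-element set I of coordinates, the function sending a ∈ (ℤ/qℤ)^I to the number of x ∈ D whose restriction to I equals a is constant. -/
/-!
Let `ψ` be the additive character `a ↦ ω ^ a` of `ℤ/qℤ`. Orthogonality of characters over the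
vectors supported in a coordinate set `I` gives, for every pattern `a`,
`#{x ∈ D | x = a on I} * q ^ #I = ∑_{y supported in I} ψ (-(y ⬝ᵥ a)) * ∑_{x ∈ D} ψ (y ⬝ᵥ x)`.
If the character sums of `D` vanish for `0 < |y| ≤ t`, only `y = 0` survives and every count
is `#D / q ^ t`. Conversely, for `y ≠ 0` supported in a `t`-set `I`, grouping `∑_{x ∈ D} ψ (y ⬝ᵥ x)`
by the pattern of `x` on `I` turns it into the common count times `∑_{a supported in I} ψ (a ⬝ᵥ y)`,
which vanishes by orthogonality.
-/

open Finset Matrix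

section SupportedIn

variable {ι R : Type*} [Fintype ι] [DecidableEq ι] [Zero R] [Fintype R]

def supportedIn (I : Finset ι) : Finset (ι → R) :=
  Fintype.piFinset fun i => if i ∈ I then univ else {0}

lemma mem_supportedIn {I : Finset ι} {y : ι → R} : y ∈ supportedIn I ↔ ∀ i ∉ I, y i = 0 := by
  simp only [supportedIn, Fintype.mem_piFinset]
  refine forall_congr' fun i => ?_
  by_cases hi : i ∈ I <;> simp [hi]

lemma mem_supportedIn_iff_filter_subset [DecidableEq R] {I : Finset ι} {y : ι → R} :
    y ∈ supportedIn I ↔ ({i | y i ≠ 0} : Finset ι) ⊆ I := by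
  rw [mem_supportedIn, subset_iff]
  simp only [mem_filter, mem_univ, true_and]
  exact forall_congr' fun i => not_imp_comm

end SupportedIn

section

variable {ι R : Type*} [Fintype ι] [DecidableEq ι] [CommRing R] [Fintype R]

lemma dotProduct_piecewise_zero {I : Finset ι} {y : ι → R} (hy : y ∈ supportedIn I)
    (x : ι → R) : y ⬝ᵥ I.piecewise x 0 = y ⬝ᵥ x :=
  sum_congr rfl fun i _ => by
    by_cases hi : i ∈ I <;> simp [hi, mem_supportedIn.1 hy i]

lemma piecewise_zero_eq_iff {I : Finset ι} {a : ι → R} (ha : a ∈ supportedIn I) (x : ι → R) :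
    I.piecewise x 0 = a ↔ ∀ i ∈ I, x i = a i := by
  refine funext_iff.trans ⟨fun h i hi => by simpa [hi] using h i, fun h i => ?_⟩
  by_cases hi : i ∈ I
  · simp [hi, h i hi]
  · simp [hi, mem_supportedIn.1 ha i hi]

end

namespace AddChar

lemma map_dotProduct {ι R M : Type*} [Fintype ι] [NonUnitalNonAssocSemiring R] [CommMonoid M]
    (ψ : AddChar R M) (y x : ι → R) : ψ (y ⬝ᵥ x) = ∏ i, ψ (y i * x i) := by
  simp only [dotProduct]
  induction (univ : Finset ι) using Finset.cons_induction with
  | empty => simp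
  | cons i s hi ih => rw [sum_cons, prod_cons, map_add_eq_mul, ih]

namespace IsPrimitive

variable {ι R K : Type*} [Fintype ι] [DecidableEq ι] [CommRing R] [Fintype R] [DecidableEq R]
  [CommRing K] [IsDomain K] {ψ : AddChar R K} (hψ : ψ.IsPrimitive)
include hψ

lemma sum_supportedIn_dotProduct (I : Finset ι) (x : ι → R) :
    ∑ y ∈ supportedIn I, ψ (y ⬝ᵥ x) =
      if ∀ i ∈ I, x i = 0 then (Fintype.card R : K) ^ #I else 0 := by
  have hcoord (i : ι) : ∑ c ∈ (if i ∈ I then univ else {0}), ψ (c * x i) =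
      if i ∈ I then (if x i = 0 then (Fintype.card R : K) else 0) else 1 := by
    by_cases hi : i ∈ I
    · rw [if_pos hi, if_pos hi, sum_mulShift _ hψ, Nat.cast_ite, Nat.cast_zero]
    · simp [hi]
  simp_rw [map_dotProduct]
  rw [supportedIn, ← prod_univ_sum (fun i => if i ∈ I then univ else {0}) fun i c => ψ (c * x i)]
  simp_rw [hcoord]
  rw [prod_ite_mem, univ_inter, prod_ite_zero, prod_const]
  congr

lemma card_filter_mul_card_pow (D : Finset (ι → R)) (I : Finset ι) (a : ι → R) :
    (#{x ∈ D | ∀ i ∈ I, x i = a i} : K) * (Fintype.card R : K) ^ #I =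
      ∑ y ∈ supportedIn I, ψ (-(y ⬝ᵥ a)) * ∑ x ∈ D, ψ (y ⬝ᵥ x) := by
  have hx (x : ι → R) : (if ∀ i ∈ I, x i = a i then (Fintype.card R : K) ^ #I else 0) =
      ∑ y ∈ supportedIn I, ψ (-(y ⬝ᵥ a)) * ψ (y ⬝ᵥ x) := by
    simp_rw [← map_add_eq_mul, neg_add_eq_sub, ← dotProduct_sub,
      hψ.sum_supportedIn_dotProduct, Pi.sub_apply, sub_eq_zero]
  simp_rw [natCast_card_filter, sum_mul, ite_mul, one_mul, zero_mul, hx, mul_sum]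
  exact sum_comm

lemma card_filter_mul_card_pow_eq_card {D : Finset (ι → R)} {I : Finset ι}
    (hD : ∀ y ∈ supportedIn I, y ≠ 0 → ∑ x ∈ D, ψ (y ⬝ᵥ x) = 0) (a : ι → R) :
    (#{x ∈ D | ∀ i ∈ I, x i = a i} : K) * (Fintype.card R : K) ^ #I = #D := by
  rw [hψ.card_filter_mul_card_pow, sum_eq_single_of_mem (0 : ι → R) (by simp [mem_supportedIn])
    fun y hy hy0 => by rw [hD y hy hy0, mul_zero]]
  simp

lemma sum_eq_zero_of_card_filter_eq {D : Finset (ι → R)} {I : Finset ι}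
    (hD : ∀ a b : ι → R, #{x ∈ D | ∀ i ∈ I, x i = a i} = #{x ∈ D | ∀ i ∈ I, x i = b i})
    {y : ι → R} (hyI : y ∈ supportedIn I) (hy : y ≠ 0) : ∑ x ∈ D, ψ (y ⬝ᵥ x) = 0 := by
  have hmaps : ∀ x ∈ D, I.piecewise x 0 ∈ supportedIn I := fun x _ =>
    mem_supportedIn.2 fun i hi => by simp [hi]
  have hyx : ∃ i ∈ I, y i ≠ 0 := by
    obtain ⟨i, hi⟩ := Function.ne_iff.1 hy
    exact ⟨i, by_contra fun h => hi (mem_supportedIn.1 hyI i h), hi⟩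
  calc ∑ x ∈ D, ψ (y ⬝ᵥ x)
      = ∑ a ∈ supportedIn I, ∑ x ∈ D with I.piecewise x (0 : ι → R) = a, ψ (y ⬝ᵥ a) := by
        rw [sum_fiberwise_of_maps_to' hmaps]
        simp_rw [dotProduct_piecewise_zero hyI]
    _ = ∑ a ∈ supportedIn I, (#{x ∈ D | ∀ i ∈ I, x i = 0} : K) * ψ (a ⬝ᵥ y) := by
        refine sum_congr rfl fun a ha => ?_
        simp_rw [piecewise_zero_eq_iff ha, sum_const, nsmul_eq_mul, hD a (0 : ι → R), Pi.zero_apply]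
        rw [dotProduct_comm]
    _ = 0 := by
        rw [← mul_sum, hψ.sum_supportedIn_dotProduct, if_neg (by simpa using hyx), mul_zero]

end IsPrimitive

end AddChar

theorem design_iff_orthogonal_array_general
    (q n t : ℕ) [NeZero q] (htn : t ≤ n)
    (ω : ℂ) (hω : IsPrimitiveRoot ω q) (D : Finset (Fin n → ZMod q)) :
    (∀ y : Fin n → ZMod q, 1 ≤ hammingNorm y → hammingNorm y ≤ t →
        ∑ x ∈ D, ω ^ (∑ i, y i * x i).val = 0) ↔
      (∀ I : Finset (Fin n), I.card = t →
        ∀ a b : Fin n → ZMod q,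
          (D.filter fun x => ∀ i ∈ I, x i = a i).card =
            (D.filter fun x => ∀ i ∈ I, x i = b i).card) := by
  set ψ := AddChar.zmodChar q hω.pow_eq_one
  have hψ : ψ.IsPrimitive := AddChar.zmodChar_primitive_of_primitive_root q hω
  have hχ (y x : Fin n → ZMod q) : ω ^ (∑ i, y i * x i).val = ψ (y ⬝ᵥ x) := rfl
  simp_rw [hχ, Nat.one_le_iff_ne_zero, Ne, hammingNorm_eq_zero]
  -- The statement decides `∀ i ∈ I, _` by a `Fin`-specific instance; the two `convert`s below
  -- only reconcile it with the generic one used in the lemmas.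
  constructor
  · rintro hD I rfl a b
    have hDI (y) (hyI : y ∈ supportedIn I) (hy : y ≠ 0) : ∑ x ∈ D, ψ (y ⬝ᵥ x) = 0 :=
      hD y hy (card_le_card (mem_supportedIn_iff_filter_subset.1 hyI))
    have hcount := (hψ.card_filter_mul_card_pow_eq_card hDI a).trans
      (hψ.card_filter_mul_card_pow_eq_card hDI b).symm
    have hq : (Fintype.card (ZMod q) : ℂ) ^ #I ≠ 0 := by simp [NeZero.ne q]
    convert (Nat.cast_inj (R := ℂ)).1 (mul_right_cancel₀ hq hcount)
  · intro hOA y hy hyt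
    obtain ⟨I, hyI, rfl⟩ := exists_superset_card_eq hyt (by simpa using htn)
    exact hψ.sum_eq_zero_of_card_filter_eq (by convert hOA I rfl)
      (mem_supportedIn_iff_filter_subset.2 hyI) hy

/-- A subset `D ⊆ (ℤ/qℤ)^n` satisfies `∑_{x∈D} χ_y(x) = 0` for every `y` with
`1 ≤ |y| ≤ t` (i.e. is a `Φ_{[t]}`-design of the Hamming graph `H(n,q)`) if and only if
`D` is an orthogonal array with parameters `(t,n,q)`: for every `t`-element set `I` of
coordinates, the number of elements of `D` restricting to a given pattern on `I` is
the same for all patterns. -/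
theorem design_iff_orthogonal_array
    (q n t : ℕ) [NeZero q] (hq : 2 ≤ q) (ht1 : 1 ≤ t) (htn : t ≤ n)
    (ω : ℂ) (hω : IsPrimitiveRoot ω q) (D : Finset (Fin n → ZMod q)) :
    (∀ y : Fin n → ZMod q, 1 ≤ hammingNorm y → hammingNorm y ≤ t →
        ∑ x ∈ D, ω ^ (∑ i, y i * x i).val = 0) ↔
      (∀ I : Finset (Fin n), I.card = t →
        ∀ a b : Fin n → ZMod q,
          (D.filter fun x => ∀ i ∈ I, x i = a i).card =
            (D.filter fun x => ∀ i ∈ I, x i = b i).card) :=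
  design_iff_orthogonal_array_general q n t htn ω hω D
end

section
/- Let q ≥ 2 and 1 ≤ t ≤ n. If D ⊆ (ℤ/qℤ)^n satisfies ∑_{x∈D} χ_y(x) = 0 for every y ∈ (ℤ/qℤ)^n with 1 ≤ |y| ≤ t, then q^t divides |D|; in particular, if D is nonempty then |D| ≥ q^t. -/
/-! The characters `x ↦ ω ^ (y ⬝ᵥ x)` with `y` supported on the first `t` coordinates are the
characters of `(ℤ/qℤ)^t` pulled back along the projection onto those coordinates. The design
condition kills the nontrivial ones on `D`, so by orthogonality every fibre of the projection
restricted to `D` has the same size, and `|D| = q^t · (fibre size)`. -/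

open Finset Matrix

namespace AddChar

variable {R R' : Type*} [CommRing R] [Fintype R] [DecidableEq R] [CommRing R'] [IsDomain R']

lemma map_sum_eq_prod {A M ι : Type*} [AddCommMonoid A] [CommMonoid M] (ψ : AddChar A M)
    (s : Finset ι) (f : ι → A) : ψ (∑ i ∈ s, f i) = ∏ i ∈ s, ψ (f i) := by
  classical
  induction s using Finset.induction_on with
  | empty => simp
  | insert i s hi ih => rw [sum_insert hi, prod_insert hi, map_add_eq_mul, ih]

lemma sum_dotProduct_eq_ite {ι : Type*} [Fintype ι] [DecidableEq ι] {ψ : AddChar R R'}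
    (hψ : ψ.IsPrimitive) (v : ι → R) :
    ∑ b : ι → R, ψ (b ⬝ᵥ v) = if v = 0 then (Fintype.card R : R') ^ Fintype.card ι else 0 := by
  simp only [dotProduct, map_sum_eq_prod]
  rw [← Fintype.prod_sum (fun i r => ψ (r * v i))]
  simp only [sum_mulShift _ hψ, Nat.cast_ite, Nat.cast_zero, Fintype.prod_ite_zero, prod_const,
    card_univ, funext_iff, Pi.zero_apply]

lemma card_pow_mul_card_filter_eq_card {ι α : Type*} [Fintype ι] [DecidableEq ι] [CharZero R']
    {ψ : AddChar R R'} (hψ : ψ.IsPrimitive) (p : α → ι → R) (D : Finset α)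
    (hD : ∀ b ≠ 0, ∑ x ∈ D, ψ (b ⬝ᵥ p x) = 0) (a : ι → R) :
    Fintype.card R ^ Fintype.card ι * #{x ∈ D | p x = a} = #D := by
  have key (b : ι → R) : ∑ x ∈ D, ψ (b ⬝ᵥ (p x - a)) = if b = 0 then (#D : R') else 0 := by
    split_ifs with hb
    · simp [hb]
    · simp_rw [dotProduct_sub, sub_eq_add_neg, map_add_eq_mul, ← sum_mul, hD b hb, zero_mul]
  have : (Fintype.card R ^ Fintype.card ι * #{x ∈ D | p x = a} : R') = #D :=
    calc (Fintype.card R ^ Fintype.card ι * #{x ∈ D | p x = a} : R')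
        = ∑ x ∈ D, ∑ b : ι → R, ψ (b ⬝ᵥ (p x - a)) := by
          simp only [sum_dotProduct_eq_ite hψ, sub_eq_zero, sum_ite, sum_const_zero, add_zero,
            sum_const, nsmul_eq_mul, mul_comm]
      _ = #D := by rw [sum_comm, sum_congr rfl fun b _ => key b, sum_ite_eq']; simp
  exact_mod_cast this

end AddChar

lemma dotProduct_extend_zero {R ι κ : Type*} [Fintype ι] [Fintype κ] [NonUnitalNonAssocSemiring R]
    {e : ι → κ} (he : e.Injective) (b : ι → R) (x : κ → R) :
    Function.extend e b 0 ⬝ᵥ x = b ⬝ᵥ (x ∘ e) :=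
  (Fintype.sum_of_injective e he _ _
    (fun k hk => by rw [Function.extend_apply' _ _ _ hk, Pi.zero_apply, zero_mul])
    (fun i => by rw [he.extend_apply, Function.comp_apply])).symm

lemma hammingNorm_extend_zero {β ι κ : Type*} [Fintype ι] [Fintype κ] [Zero β] [DecidableEq β]
    {e : ι → κ} (he : e.Injective) (b : ι → β) :
    hammingNorm (Function.extend e b 0) = hammingNorm b := by
  classical
  rw [hammingNorm, hammingNorm, ← card_map ⟨e, he⟩]
  congr 1
  ext k
  simp only [mem_filter, mem_univ, true_and, mem_map, Function.Embedding.coeFn_mk]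
  by_cases hk : ∃ i, e i = k
  · obtain ⟨i, rfl⟩ := hk
    simp [he.extend_apply, he.eq_iff]
  · simp_all

theorem design_card_dvd_general
    (q n t : ℕ) [NeZero q] (htn : t ≤ n)
    (ω : ℂ) (hω : IsPrimitiveRoot ω q) (D : Finset (Fin n → ZMod q))
    (hD : ∀ y : Fin n → ZMod q, 1 ≤ hammingNorm y → hammingNorm y ≤ t →
        ∑ x ∈ D, ω ^ (∑ i, y i * x i).val = 0) :
    q ^ t ∣ D.card ∧ (D.Nonempty → q ^ t ≤ D.card) := by
  set ψ := AddChar.zmodChar q hω.pow_eq_one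
  have he := Fin.castLE_injective htn
  have hψD (b : Fin t → ZMod q) (hb : b ≠ 0) : ∑ x ∈ D, ψ (b ⬝ᵥ (x ∘ Fin.castLE htn)) = 0 := by
    have hb1 : 1 ≤ hammingNorm (Function.extend (Fin.castLE htn) b 0) := by
      rw [hammingNorm_extend_zero he]
      exact hammingNorm_pos_iff.mpr hb
    have hbt : hammingNorm (Function.extend (Fin.castLE htn) b 0) ≤ t := by
      simpa only [hammingNorm_extend_zero he, Fintype.card_fin] using
        hammingNorm_le_card_fintype (x := b)
    refine Eq.trans (sum_congr rfl fun x _ => ?_) (hD _ hb1 hbt)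
    rw [AddChar.zmodChar_apply, ← dotProduct_extend_zero he, dotProduct]
  have hdvd : q ^ t ∣ #D := by
    have := AddChar.card_pow_mul_card_filter_eq_card
      (AddChar.zmodChar_primitive_of_primitive_root q hω) _ D hψD 0
    rw [ZMod.card, Fintype.card_fin] at this
    exact Dvd.intro _ this
  exact ⟨hdvd, fun hne => Nat.le_of_dvd hne.card_pos hdvd⟩

/-- If `D ⊆ (ℤ/qℤ)^n` is a `Φ_{[t]}`-design of the Hamming graph `H(n,q)`, i.e.
`∑_{x∈D} χ_y(x) = 0` for every `y` with `1 ≤ |y| ≤ t`, then `q^t` divides `|D|`;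
in particular if `D` is nonempty then `|D| ≥ q^t`. -/
theorem design_card_dvd
    (q n t : ℕ) [NeZero q] (hq : 2 ≤ q) (ht1 : 1 ≤ t) (htn : t ≤ n)
    (ω : ℂ) (hω : IsPrimitiveRoot ω q) (D : Finset (Fin n → ZMod q))
    (hD : ∀ y : Fin n → ZMod q, 1 ≤ hammingNorm y → hammingNorm y ≤ t →
        ∑ x ∈ D, ω ^ (∑ i, y i * x i).val = 0) :
    q ^ t ∣ D.card ∧ (D.Nonempty → q ^ t ≤ D.card) :=
  design_card_dvd_general q n t htn ω hω D hD
end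

section
/- Let q ≥ 2, 1 ≤ t ≤ n, and D ⊆ (ℤ/qℤ)^n. For a t-element set I of coordinates and a ∈ (ℤ/qℤ)^I, let f_{D,I}(a) denote the number of x ∈ D whose restriction to I equals a. Then ∑_{x∈D} χ_y(x) = 0 for every y ∈ (ℤ/qℤ)^n with 1 ≤ |y| ≤ t if and only if for every such I, every nonzero b ∈ (ℤ/qℤ)^I, and every c ∈ ℤ/qℤ for which the hyperplane H = {a ∈ (ℤ/qℤ)^I : ∑_{i∈I} b_i a_i = c} is nonempty, one has q^t · ∑_{a∈H} f_{D,I}(a) = |H| · |D| (i.e., the average of f_{D,I} over H equals |D|/q^t). -/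
/-!
For `y` supported in a `t`-set `I` of coordinates, the character sum of `D` at `y` is the
Fourier coefficient of `f_{D,I}` at `y|_I`, and every `y` with `|y| ≤ t` is supported in such an
`I`. If all nonzero Fourier coefficients of `f_{D,I}` vanish, Fourier inversion makes `f_{D,I}`
constant, equal to `|D| / q^t`, which gives the hyperplane averages. Conversely, grouping the
Fourier coefficient at `b ≠ 0` by the level sets `b·a = c` and replacing each hyperplane sum
by `|H| |D| / q^t` turns it into `|D| / q^t` times the character sum of `(ℤ/qℤ)^t` at `b`,
which is `0`.
-/

open Finset Matrix

lemma Finset.sum_mul_comp_congr_of_sum_fiber_eq {α β M : Type*} [Fintype α] [Fintype β]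
    [DecidableEq β] [CommSemiring M] (ℓ : α → β) (φ : β → M) {g h : α → M}
    (hgh : ∀ c, ∑ a with ℓ a = c, g a = ∑ a with ℓ a = c, h a) :
    ∑ a, g a * φ (ℓ a) = ∑ a, h a * φ (ℓ a) := by
  have fiberwise (k : α → M) : ∑ a, k a * φ (ℓ a) = ∑ c, (∑ a with ℓ a = c, k a) * φ c := by
    rw [← sum_fiberwise univ ℓ]
    refine sum_congr rfl fun c _ => ?_
    rw [sum_mul]
    exact sum_congr rfl fun a ha => by rw [(mem_filter.1 ha).2]
  simp_rw [fiberwise, hgh]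

section Projection

variable {ι R : Type*} [DecidableEq ι] [DecidableEq R]

/-- `f_{D,I}(a)` -/
def projCount (D : Finset (ι → R)) (I : Finset ι) (a : I → R) : ℕ :=
  #{x ∈ D | ∀ i : I, x i = a i}

lemma sum_projCount_mul [Fintype R] {M : Type*} [CommSemiring M] (D : Finset (ι → R))
    (I : Finset ι) (G : (I → R) → M) :
    ∑ a, (projCount D I a : M) * G a = ∑ x ∈ D, G (I.restrict x) := by
  rw [← sum_fiberwise' D I.restrict G]
  refine sum_congr rfl fun a _ => ?_
  simp [projCount, funext_iff]

lemma sum_projCount [Fintype R] (D : Finset (ι → R)) (I : Finset ι) :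
    ∑ a, projCount D I a = #D := by
  simpa using sum_projCount_mul (M := ℕ) D I 1

variable [Fintype ι] [CommRing R] [Fintype R]

lemma sum_apply_dotProduct_eq_sum_projCount_mul {M : Type*} [CommSemiring M] (φ : R → M)
    (D : Finset (ι → R)) {I : Finset ι} {y : ι → R} (hy : ∀ j ∉ I, y j = 0) :
    ∑ x ∈ D, φ (y ⬝ᵥ x) = ∑ a, (projCount D I a : M) * φ (I.restrict y ⬝ᵥ a) := by
  have hdot (x : ι → R) : I.restrict y ⬝ᵥ I.restrict x = y ⬝ᵥ x :=
    (sum_coe_sort I fun j => y j * x j).trans <|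
      sum_subset (subset_univ I) fun j _ hj => by rw [hy j hj, zero_mul]
  simp_rw [sum_projCount_mul, hdot]

lemma forall_sum_apply_dotProduct_eq_zero_iff {M : Type*} [CommSemiring M] (φ : R → M)
    (D : Finset (ι → R)) {t : ℕ} (ht : t ≤ Fintype.card ι) :
    (∀ y : ι → R, 1 ≤ hammingNorm y → hammingNorm y ≤ t → ∑ x ∈ D, φ (y ⬝ᵥ x) = 0) ↔
      ∀ I : Finset ι, #I = t → ∀ b : I → R, b ≠ 0 →
        ∑ a, (projCount D I a : M) * φ (b ⬝ᵥ a) = 0 := by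
  constructor
  · intro hD I hI b hb
    let y : ι → R := fun j => if h : j ∈ I then b ⟨j, h⟩ else 0
    have hy : ∀ j ∉ I, y j = 0 := fun j hj => dif_neg hj
    have hyb : I.restrict y = b := funext fun i => dif_pos i.2
    rw [← hyb, ← sum_apply_dotProduct_eq_sum_projCount_mul φ D hy]
    refine hD y ?_ ?_
    · exact hammingNorm_pos_iff.2 fun h => hb (by rw [← hyb, h]; rfl)
    · exact hI ▸ card_le_card fun j hj => by_contra fun hjI => (mem_filter.1 hj).2 (hy j hjI)
  · intro hD y hy1 hyt
    obtain ⟨I, hsupp, hI⟩ := exists_superset_card_eq hyt ht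
    have hy : ∀ j ∉ I, y j = 0 := fun j hj => by_contra fun h => hj (hsupp (by simpa using h))
    rw [sum_apply_dotProduct_eq_sum_projCount_mul φ D hy]
    refine hD I hI _ fun h => hammingNorm_pos_iff.1 hy1 (funext fun j => ?_)
    by_cases hj : j ∈ I
    · exact congrFun h ⟨j, hj⟩
    · exact hy j hj

end Projection

namespace AddChar

variable {R R' ι : Type*} [CommRing R] [Fintype R] [DecidableEq R] [CommRing R'] [IsDomain R']
  [Fintype ι] [DecidableEq ι] {ψ : AddChar R R'}

lemma IsPrimitive.sum_apply_dotProduct (hψ : ψ.IsPrimitive) (b : ι → R) :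
    ∑ a : ι → R, ψ (b ⬝ᵥ a) = if b = 0 then (Fintype.card R : R') ^ Fintype.card ι else 0 := by
  split_ifs with hb
  · simp [hb]
  obtain ⟨i, hi⟩ := Function.ne_iff.1 hb
  obtain ⟨x, hx⟩ := ne_one_iff.1 (hψ hi)
  let χ : AddChar (ι → R) R' := ψ.compAddMonoidHom (dotProductBilin R R b).toAddMonoidHom
  have hχ : χ ≠ 1 := ne_one_iff.2 ⟨Pi.single i x, by simpa [χ, dotProduct_single] using hx⟩
  exact sum_eq_zero_of_ne_one hχ

lemma IsPrimitive.card_pow_mul_eq_sum (hψ : ψ.IsPrimitive) {g : (ι → R) → R'}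
    (hg : ∀ b ≠ 0, ∑ a, g a * ψ (b ⬝ᵥ a) = 0) (a₀ : ι → R) :
    (Fintype.card R : R') ^ Fintype.card ι * g a₀ = ∑ a, g a := by
  -- Fourier inversion at `a₀`, where only the coefficient at `b = 0` survives.
  calc (Fintype.card R : R') ^ Fintype.card ι * g a₀
      = ∑ a, g a * ∑ b, ψ (b ⬝ᵥ (a - a₀)) := by
        simp_rw [dotProduct_comm _ (_ - a₀), hψ.sum_apply_dotProduct, sub_eq_zero]
        simp [mul_comm]
    _ = ∑ b, ψ (-(b ⬝ᵥ a₀)) * ∑ a, g a * ψ (b ⬝ᵥ a) := by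
        simp_rw [mul_sum, dotProduct_sub, sub_eq_neg_add, map_add_eq_mul]
        rw [sum_comm]
        simp only [mul_left_comm]
    _ = ∑ a, g a := by
        rw [sum_eq_single 0 (fun b _ hb => by rw [hg b hb, mul_zero]) (by simp)]
        simp

lemma IsPrimitive.forall_sum_mul_apply_dotProduct_eq_zero_iff [CharZero R'] (hψ : ψ.IsPrimitive)
    (g : (ι → R) → ℕ) :
    (∀ b ≠ 0, ∑ a, (g a : R') * ψ (b ⬝ᵥ a) = 0) ↔
      ∀ b ≠ 0, ∀ c, Fintype.card R ^ Fintype.card ι * ∑ a with b ⬝ᵥ a = c, g a =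
        #{a | b ⬝ᵥ a = c} * ∑ a, g a := by
  constructor
  · intro hg b _ c
    have huniform (a : ι → R) : Fintype.card R ^ Fintype.card ι * g a = ∑ a, g a := by
      exact_mod_cast hψ.card_pow_mul_eq_sum hg a
    rw [mul_sum, sum_congr rfl fun a _ => huniform a, sum_const, smul_eq_mul]
  · intro hH b hb
    have hfiber (c : R) : ∑ a with b ⬝ᵥ a = c, ((Fintype.card R ^ Fintype.card ι * g a : ℕ) : R')
        = ∑ a with b ⬝ᵥ a = c, ((∑ a, g a : ℕ) : R') := by
      rw [sum_const, ← Nat.cast_sum, ← mul_sum, hH b hb c, nsmul_eq_mul, Nat.cast_mul]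
    have key := sum_mul_comp_congr_of_sum_fiber_eq (b ⬝ᵥ ·) ψ hfiber
    simp only [← mul_sum, hψ.sum_apply_dotProduct, if_neg hb, mul_zero, Nat.cast_mul,
      Nat.cast_pow, mul_assoc] at key
    exact (mul_eq_zero.1 key).resolve_left (pow_ne_zero _ (Nat.cast_ne_zero.2 Fintype.card_ne_zero))

end AddChar

theorem design_iff_hyperplane_averages_general
    (q n t : ℕ) [NeZero q] (htn : t ≤ n)
    (ω : ℂ) (hω : IsPrimitiveRoot ω q) (D : Finset (Fin n → ZMod q)) :
    (∀ y : Fin n → ZMod q, 1 ≤ hammingNorm y → hammingNorm y ≤ t →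
        ∑ x ∈ D, ω ^ (∑ i, y i * x i).val = 0) ↔
      (∀ I : Finset (Fin n), I.card = t →
        ∀ b : ↥I → ZMod q, b ≠ 0 → ∀ c : ZMod q,
          ∀ H : Finset (↥I → ZMod q),
            H = Finset.univ.filter (fun a : ↥I → ZMod q => ∑ i, b i * a i = c) →
            H.Nonempty →
            q ^ t * ∑ a ∈ H, (D.filter fun x => ∀ i : ↥I, x i.1 = a i).card =
              H.card * D.card) := by
  have hψ := AddChar.zmodChar_primitive_of_primitive_root q hω
  -- `ω ^ z.val` is `AddChar.zmodChar q _ z` by definition.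
  refine (forall_sum_apply_dotProduct_eq_zero_iff (AddChar.zmodChar q hω.pow_eq_one) D
    (by simpa using htn)).trans (forall₂_congr fun I hI => ?_)
  rw [hψ.forall_sum_mul_apply_dotProduct_eq_zero_iff, ZMod.card, Fintype.card_coe, hI,
    sum_projCount]
  refine forall₂_congr fun b _ => forall_congr' fun c => ⟨fun h H hH _ => hH ▸ h, fun h => ?_⟩
  obtain hH | hH := (univ.filter fun a : I → ZMod q => b ⬝ᵥ a = c).eq_empty_or_nonempty
  · simp [hH]
  · exact h _ rfl hH

/-- `D ⊆ (ℤ/qℤ)^n` is a `Φ_{[t]}`-design of the Hamming graph `H(n,q)` (it averages all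
characters `χ_y` with `1 ≤ |y| ≤ t`) if and only if for every `t`-element set `I` of
coordinates, the counting function `f_{D,I}` has average `|D|/q^t` over every nonempty
hyperplane `{a ∈ (ℤ/qℤ)^I : b·a = c}` (for nonzero `b`). -/
theorem design_iff_hyperplane_averages
    (q n t : ℕ) [NeZero q] (hq : 2 ≤ q) (ht1 : 1 ≤ t) (htn : t ≤ n)
    (ω : ℂ) (hω : IsPrimitiveRoot ω q) (D : Finset (Fin n → ZMod q)) :
    (∀ y : Fin n → ZMod q, 1 ≤ hammingNorm y → hammingNorm y ≤ t →
        ∑ x ∈ D, ω ^ (∑ i, y i * x i).val = 0) ↔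
      (∀ I : Finset (Fin n), I.card = t →
        ∀ b : ↥I → ZMod q, b ≠ 0 → ∀ c : ZMod q,
          ∀ H : Finset (↥I → ZMod q),
            H = Finset.univ.filter (fun a : ↥I → ZMod q => ∑ i, b i * a i = c) →
            H.Nonempty →
            q ^ t * ∑ a ∈ H, (D.filter fun x => ∀ i : ↥I, x i.1 = a i).card =
              H.card * D.card) :=
  design_iff_hyperplane_averages_general q n t htn ω hω D
end

section
/- Let n ≥ 1 and let D be a nonempty subset of (ℤ/2ℤ)^n such that ∑_{x∈D} (−1)^{y·x} = 0 for every y ∈ (ℤ/2ℤ)^n with 1 ≤ |y| ≤ 2. Then |D| > n. -/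
/-!
The constant function and the n functions `x ↦ (-1)^(x k)` on `D` are pairwise orthogonal in
`ℝ^D`: each pairwise product is a character `χ_y` with `1 ≤ |y| ≤ 2`, whose sum over `D`
vanishes. Being nonzero, these `n + 1` vectors are linearly independent, so `n + 1 ≤ |D|`.
-/

open Finset

theorem card_le_card_of_pairwise_orthogonal {α ι : Type*} [Fintype ι] (D : Finset α)
    (g : ι → α → ℝ) (horth : Pairwise fun i j => ∑ x ∈ D, g i x * g j x = 0)
    (hne : ∀ i, ∃ x ∈ D, g i x ≠ 0) : Fintype.card ι ≤ #D := by
  let v : ι → EuclideanSpace ℝ D := fun i => WithLp.toLp 2 fun x => g i x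
  have hv : ∀ i, v i ≠ 0 := fun i hvi => by
    obtain ⟨x, hx, hgx⟩ := hne i
    exact hgx (congrArg (· ⟨x, hx⟩) hvi)
  have hvorth : Pairwise fun i j => inner ℝ (v i) (v j) = 0 := fun i j hij => by
    simpa [v, PiLp.inner_apply, mul_comm, D.sum_attach (fun x => g i x * g j x)]
      using horth hij
  simpa using (linearIndependent_of_ne_zero_of_inner_eq_zero hv hvorth).fintype_card_le_finrank

theorem Option.disjoint_toFinset_of_ne {α : Type*} {o o' : Option α} (h : o ≠ o') :
    Disjoint o.toFinset o'.toFinset := by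
  cases o <;> cases o' <;> simp_all

section Hypercube

variable {ι : Type*} [Fintype ι] [DecidableEq ι]

theorem hammingNorm_ite_mem {β : Type*} [Zero β] [One β] [NeZero (1 : β)] [DecidableEq β]
    (s : Finset ι) : hammingNorm (fun i => if i ∈ s then (1 : β) else 0) = #s := by
  simp [hammingNorm]

theorem sum_val_ite_mem_mul_val (s : Finset ι) (x : ι → ZMod 2) :
    ∑ i, (if i ∈ s then (1 : ZMod 2) else 0).val * (x i).val = ∑ i ∈ s, (x i).val := by
  simp [apply_ite ZMod.val, ite_mul, sum_ite_mem, ZMod.val_one]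

def IsPhiDesign (t : ℕ) (D : Finset (ι → ZMod 2)) : Prop :=
  ∀ y : ι → ZMod 2, 1 ≤ hammingNorm y → hammingNorm y ≤ t →
    ∑ x ∈ D, (-1 : ℝ) ^ (∑ i, (y i).val * (x i).val) = 0

namespace IsPhiDesign

variable {t : ℕ} {D : Finset (ι → ZMod 2)}

theorem sum_prod_eq_zero (hD : IsPhiDesign t D) {s : Finset ι} (hs : s.Nonempty)
    (hst : #s ≤ t) : ∑ x ∈ D, ∏ i ∈ s, (-1 : ℝ) ^ (x i).val = 0 := by
  have h := hD (fun i => if i ∈ s then 1 else 0) (by rw [hammingNorm_ite_mem]; exact hs.card_pos)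
    (by rwa [hammingNorm_ite_mem])
  simpa only [sum_val_ite_mem_mul_val, prod_pow_eq_pow_sum] using h

theorem sum_prod_mul_prod_eq_zero (hD : IsPhiDesign t D) {s u : Finset ι} (hsu : Disjoint s u)
    (hne : (s ∪ u).Nonempty) (hcard : #s + #u ≤ t) :
    ∑ x ∈ D, (∏ i ∈ s, (-1 : ℝ) ^ (x i).val) * ∏ i ∈ u, (-1 : ℝ) ^ (x i).val = 0 := by
  simpa only [prod_union hsu] using hD.sum_prod_eq_zero hne (by rwa [card_union_of_disjoint hsu])

end IsPhiDesign

end Hypercube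

theorem phi2_design_card_gt_general
    (n : ℕ) (D : Finset (Fin n → ZMod 2)) (hne : D.Nonempty)
    (hD : ∀ y : Fin n → ZMod 2, 1 ≤ hammingNorm y → hammingNorm y ≤ 2 →
        ∑ x ∈ D, (-1 : ℝ) ^ (∑ i, (y i).val * (x i).val) = 0) :
    n < D.card := by
  have hdesign : IsPhiDesign 2 D := hD
  let χ : Option (Fin n) → (Fin n → ZMod 2) → ℝ := fun o x =>
    ∏ i ∈ o.toFinset, (-1) ^ (x i).val
  have horth : Pairwise fun o o' => ∑ x ∈ D, χ o x * χ o' x = 0 := fun o o' h => by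
    refine hdesign.sum_prod_mul_prod_eq_zero (Option.disjoint_toFinset_of_ne h) ?_ ?_
    · cases o <;> cases o' <;> simp_all
    · cases o <;> cases o' <;> simp
  obtain ⟨x₀, hx₀⟩ := hne
  have hχ : ∀ o, ∃ x ∈ D, χ o x ≠ 0 := fun o =>
    ⟨x₀, hx₀, prod_ne_zero_iff.2 fun _ _ => by positivity⟩
  simpa using card_le_card_of_pairwise_orthogonal D χ horth hχ

/-- If `D ⊆ (ℤ/2ℤ)^n` is a nonempty `Φ_{[2]}`-design of the hypercube graph `H(n,2)`,
i.e. `∑_{x∈D} (−1)^{y·x} = 0` for every `y` with `1 ≤ |y| ≤ 2`, then `|D| > n`. -/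
theorem phi2_design_card_gt
    (n : ℕ) (hn : 1 ≤ n) (D : Finset (Fin n → ZMod 2)) (hne : D.Nonempty)
    (hD : ∀ y : Fin n → ZMod 2, 1 ≤ hammingNorm y → hammingNorm y ≤ 2 →
        ∑ x ∈ D, (-1 : ℝ) ^ (∑ i, (y i).val * (x i).val) = 0) :
    n < D.card :=
  phi2_design_card_gt_general n D hne hD
end

section
/- Let ℓ ≥ 1 and n = 4ℓ − 1. There exists a subset D ⊆ (ℤ/2ℤ)^n with |D| = 4ℓ satisfying ∑_{x∈D} (−1)^{y·x} = 0 for every y ∈ (ℤ/2ℤ)^n with 1 ≤ |y| ≤ 2, if and only if there exists a 4ℓ × 4ℓ Hadamard matrix, i.e. a matrix H with all entries in {+1, −1} satisfying H · Hᵀ = 4ℓ · I. -/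
/-!
Adjoin a constant coordinate to the points of `D ⊆ 𝔽₂ⁿ` and replace each bit `b` by `(-1)^b`:
this gives a `|D| × (n+1)` sign matrix `S`, and the design conditions for `|y| = 1` and `|y| = 2`
say exactly that the columns of `S` are pairwise orthogonal, i.e. `SᵀS = |D| • 1`. When
`|D| = n + 1` this makes `Sᵀ` a Hadamard matrix. Conversely, multiplying the rows of a Hadamard
matrix by `±1` makes one column constant; the other columns then encode `n + 1` points, which are
distinct because the rows are orthogonal.
-/

open Finset Matrix

namespace Matrix

theorem mul_eq_smul_one_comm {ι K : Type*} [Fintype ι] [DecidableEq ι] [Field K]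
    {A B : Matrix ι ι K} {c : K} (hc : c ≠ 0) : A * B = c • 1 ↔ B * A = c • 1 := by
  rw [← inv_smul_eq_iff₀ hc, ← inv_smul_eq_iff₀ hc, ← Matrix.smul_mul, ← Matrix.mul_smul,
    mul_eq_one_comm]

theorem injective_of_mul_eq_smul_one {ι κ R : Type*} [Fintype κ] [DecidableEq ι]
    [NonAssocSemiring R] {A : Matrix ι κ R} {B : Matrix κ ι R} {c : R} (hc : c ≠ 0)
    (h : A * B = c • 1) : Function.Injective A := by
  intro i i' hii
  have hrow : (A * B) i i = (A * B) i' i := by simp only [mul_apply, hii]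
  by_contra hne
  simp [h, Ne.symm hne, hc] at hrow

theorem exists_col_eq_one_transpose_mul_self_eq {ι κ R : Type*} [Fintype ι] [CommRing R]
    {H : Matrix ι κ R} (hH : ∀ i j, H i j = 1 ∨ H i j = -1) (j₀ : κ) :
    ∃ H' : Matrix ι κ R, (∀ i j, H' i j = 1 ∨ H' i j = -1) ∧ (∀ i, H' i j₀ = 1) ∧
      H'ᵀ * H' = Hᵀ * H := by
  classical
  have hsq (i : ι) : H i j₀ * H i j₀ = 1 := by rcases hH i j₀ with h | h <;> simp [h]
  refine ⟨diagonal (fun i => H i j₀) * H, fun i j => ?_, fun i => ?_, ?_⟩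
  · rw [diagonal_mul]
    rcases hH i j₀ with h | h <;> rcases hH i j with h' | h' <;> simp [h, h']
  · rw [diagonal_mul, hsq]
  · rw [transpose_mul, diagonal_transpose, Matrix.mul_assoc, ← Matrix.mul_assoc (diagonal _),
      diagonal_mul_diagonal]
    simp only [hsq, diagonal_one, Matrix.one_mul]

theorem exists_hadamard_of_transpose_mul_self {ι κ R : Type*} [Fintype ι] [Fintype κ]
    [DecidableEq κ] [CommRing R] {m : ℕ} (hι : Fintype.card ι = m) (hκ : Fintype.card κ = m)
    {S : Matrix ι κ R} (hS : ∀ i j, S i j = 1 ∨ S i j = -1) {c : R} (h : Sᵀ * S = c • 1) :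
    ∃ H : Matrix (Fin m) (Fin m) R, (∀ i j, H i j = 1 ∨ H i j = -1) ∧ H * Hᵀ = c • 1 := by
  let eι := (Fintype.equivFinOfCardEq hι).symm
  let eκ := (Fintype.equivFinOfCardEq hκ).symm
  refine ⟨Sᵀ.submatrix eκ eι, fun i j => hS _ _, ?_⟩
  rw [transpose_submatrix, transpose_transpose, submatrix_mul_equiv, h]
  exact congrArg (fun M : Matrix (Fin m) (Fin m) R => c • M) (submatrix_one_equiv eκ)

end Matrix

section SignMatrix

variable {ι κ R : Type*} [CommRing R]

theorem neg_one_pow_sum_val_mul_val [Fintype κ] (y x : κ → ZMod 2) :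
    (-1 : R) ^ (∑ k, (y k).val * (x k).val) = ∏ k ∈ {k | y k ≠ 0}, (-1 : R) ^ (x k).val := by
  rw [prod_pow_eq_pow_sum, sum_filter]
  refine congrArg _ (sum_congr rfl fun k _ => ?_)
  obtain h | h : y k = 0 ∨ y k = 1 := by generalize y k = a; revert a; decide
  all_goals simp [h, ZMod.val_one]

theorem forall_hammingNorm_le_two_iff [Fintype κ] [DecidableEq κ] {M : Type*} [Zero M] [One M]
    [NeZero (1 : M)] [DecidableEq M] (F : Finset κ → Prop) :
    (∀ y : κ → M, 1 ≤ hammingNorm y → hammingNorm y ≤ 2 → F {k | y k ≠ 0}) ↔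
      (∀ k, F {k}) ∧ ∀ k k', k ≠ k' → F {k, k'} := by
  have support_indicator (s : Finset κ) :
      ({k | (if k ∈ s then (1 : M) else 0) ≠ 0} : Finset κ) = s := by
    ext k; by_cases hk : k ∈ s <;> simp [hk]
  constructor
  · intro h
    have hs (s : Finset κ) (h₁ : 1 ≤ #s) (h₂ : #s ≤ 2) : F s := by
      simpa only [support_indicator] using
        h (fun k => if k ∈ s then 1 else 0) (by rwa [hammingNorm, support_indicator])
          (by rwa [hammingNorm, support_indicator])
    exact ⟨fun k => hs {k} (by simp) (by simp),
      fun k k' hk => hs {k, k'} (by simp [card_pair hk]) (by simp [card_pair hk])⟩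
  · rintro ⟨h₁, h₂⟩ y hy₁ hy₂
    obtain hy | hy : hammingNorm y = 1 ∨ hammingNorm y = 2 := by omega
    · obtain ⟨k, hk⟩ := card_eq_one.mp hy
      exact hk ▸ h₁ k
    · obtain ⟨k, k', hkk', hk⟩ := card_eq_two.mp hy
      exact hk ▸ h₂ k k' hkk'

variable (R) in
def signMatrix (x : ι → κ → ZMod 2) : Matrix ι (Option κ) R :=
  fun i a => a.elim 1 fun k => (-1) ^ (x i k).val

theorem signMatrix_eq_one_or_neg_one (x : ι → κ → ZMod 2) (i : ι) (a : Option κ) :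
    signMatrix R x i a = 1 ∨ signMatrix R x i a = -1 := by
  cases a with
  | none => exact Or.inl rfl
  | some k => exact neg_one_pow_eq_or R _

theorem exists_signMatrix_eq {S : Matrix ι (Option κ) R} (hS : ∀ i a, S i a = 1 ∨ S i a = -1)
    (hnone : ∀ i, S i none = 1) : ∃ x : ι → κ → ZMod 2, signMatrix R x = S := by
  have hbit (i : ι) (k : κ) : ∃ b : ZMod 2, (-1 : R) ^ b.val = S i (some k) := by
    rcases hS i (some k) with h | h
    · exact ⟨0, by simp [h]⟩
    · exact ⟨1, by simp [h, ZMod.val_one]⟩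
  choose x hx using hbit
  refine ⟨x, funext₂ fun i a => ?_⟩
  cases a with
  | none => exact (hnone i).symm
  | some k => exact hx i k

theorem transpose_signMatrix_mul_self_eq_iff_sum_eq_zero [Fintype ι] [DecidableEq κ]
    (x : ι → κ → ZMod 2) :
    (signMatrix R x)ᵀ * signMatrix R x = (Fintype.card ι : R) • 1 ↔
      (∀ k, ∑ i, (-1 : R) ^ (x i k).val = 0) ∧
        ∀ k k', k ≠ k' → ∑ i, (-1 : R) ^ (x i k).val * (-1 : R) ^ (x i k').val = 0 := by
  have hsq (i : ι) (k : κ) : (-1 : R) ^ (x i k).val * (-1 : R) ^ (x i k).val = 1 := by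
    rw [← mul_pow, neg_one_mul, neg_neg, one_pow]
  rw [← Matrix.ext_iff]
  simp only [Option.forall, mul_apply, transpose_apply, signMatrix, Option.elim_none,
    Option.elim_some, Matrix.smul_apply, mul_one, one_mul]
  constructor
  · rintro ⟨-, h⟩
    exact ⟨fun k => by simpa using (h k).1, fun k k' hk => by simpa [hk] using (h k).2 k'⟩
  · rintro ⟨h₁, h₂⟩
    refine ⟨⟨by simp, fun k => by simp [h₁]⟩, fun k => ⟨by simp [h₁], fun k' => ?_⟩⟩
    by_cases hk : k = k'
    · subst hk; simp [hsq]
    · simp [hk, h₂ k k' hk]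

theorem transpose_signMatrix_mul_self_eq_iff_forall_hammingNorm [Fintype ι] [Fintype κ]
    [DecidableEq κ] (x : ι → κ → ZMod 2) :
    (signMatrix R x)ᵀ * signMatrix R x = (Fintype.card ι : R) • 1 ↔
      ∀ y : κ → ZMod 2, 1 ≤ hammingNorm y → hammingNorm y ≤ 2 →
        ∑ i, (-1 : R) ^ (∑ k, (y k).val * (x i k).val) = 0 := by
  simp only [neg_one_pow_sum_val_mul_val]
  rw [forall_hammingNorm_le_two_iff (fun s => ∑ i, ∏ k ∈ s, (-1 : R) ^ (x i k).val = 0),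
    transpose_signMatrix_mul_self_eq_iff_sum_eq_zero]
  refine and_congr (by simp) (forall₃_congr fun k k' hk => ?_)
  simp [prod_pair hk]

theorem exists_injective_signMatrix_of_hadamard {K : Type*} [Fintype ι] [DecidableEq ι]
    [DecidableEq κ] [Field K] (e : ι ≃ Option κ) {H : Matrix ι ι K}
    (hH : ∀ i j, H i j = 1 ∨ H i j = -1) {c : K} (hc : c ≠ 0) (h : H * Hᵀ = c • 1) :
    ∃ x : ι → κ → ZMod 2, Function.Injective x ∧ (signMatrix K x)ᵀ * signMatrix K x = c • 1 := by
  obtain ⟨H', hH', hcol, hH'H⟩ := exists_col_eq_one_transpose_mul_self_eq hH (e.symm none)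
  have hT : H'ᵀ * H' = c • 1 := hH'H ▸ (mul_eq_smul_one_comm hc).1 h
  have hrows := injective_of_mul_eq_smul_one hc ((mul_eq_smul_one_comm hc).1 hT)
  obtain ⟨x, hx⟩ := exists_signMatrix_eq (S := H'.submatrix id e.symm) (fun _ _ => hH' _ _) hcol
  refine ⟨x, fun i i' hii => hrows (funext fun j => ?_), ?_⟩
  · have hsign : signMatrix K x i = signMatrix K x i' := by unfold signMatrix; rw [hii]
    simpa [hx] using congrFun hsign (e j)
  · rw [hx, transpose_submatrix, ← submatrix_mul _ _ _ _ _ Function.bijective_id, hT]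
    exact congrArg (fun M : Matrix (Option κ) (Option κ) K => c • M) (submatrix_one_equiv e.symm)

end SignMatrix

/-- For `n = 4ℓ − 1`, a `Φ_{[2]}`-design of the hypercube graph `H(n,2)` of size `4ℓ`
exists if and only if there exists a `4ℓ × 4ℓ` Hadamard matrix. -/
theorem phi2_design_iff_hadamard (ℓ : ℕ) (hl : 1 ≤ ℓ) :
    (∃ D : Finset (Fin (4 * ℓ - 1) → ZMod 2), D.card = 4 * ℓ ∧
        ∀ y : Fin (4 * ℓ - 1) → ZMod 2, 1 ≤ hammingNorm y → hammingNorm y ≤ 2 →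
          ∑ x ∈ D, (-1 : ℝ) ^ (∑ i, (y i).val * (x i).val) = 0) ↔
      (∃ H : Matrix (Fin (4 * ℓ)) (Fin (4 * ℓ)) ℝ,
        (∀ i j, H i j = 1 ∨ H i j = -1) ∧ H * Hᵀ = (4 * ℓ : ℝ) • 1) := by
  have hm : 4 * ℓ - 1 + 1 = 4 * ℓ := by omega
  constructor
  · rintro ⟨D, hD, hdesign⟩
    have hS := (transpose_signMatrix_mul_self_eq_iff_forall_hammingNorm ((↑) : D → _)).2
      fun y h₁ h₂ => (D.sum_coe_sort _).trans (hdesign y h₁ h₂)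
    rw [Fintype.card_coe, hD, Nat.cast_mul, Nat.cast_ofNat] at hS
    exact exists_hadamard_of_transpose_mul_self ((Fintype.card_coe D).trans hD)
      (by rw [Fintype.card_option, Fintype.card_fin, hm]) (signMatrix_eq_one_or_neg_one _) hS
  · rintro ⟨H, hH, hHH⟩
    obtain ⟨x, hx, hS⟩ := exists_injective_signMatrix_of_hadamard
      ((finCongr hm.symm).trans (finSuccEquiv _)) hH (by positivity) hHH
    refine ⟨univ.image x, by rw [card_image_of_injective _ hx, card_univ, Fintype.card_fin],
      fun y h₁ h₂ => ?_⟩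
    rw [sum_image fun i _ j _ hij => hx hij]
    refine (transpose_signMatrix_mul_self_eq_iff_forall_hammingNorm x).1 ?_ y h₁ h₂
    rwa [Fintype.card_fin, Nat.cast_mul, Nat.cast_ofNat]
end

section
/- Let G be a finite simple d-regular graph (d ≥ 1) on vertex set V with adjacency matrix A, and let D ⊆ V be nonempty. Suppose that for every real μ ≠ 0 and every x : V → ℝ with A x = μ x and ∑_{v∈V} x(v) = 0, one has ∑_{v∈D} x(v) = 0. Then m = d·|D|/|V| is a positive integer and every vertex of G is adjacent to exactly m vertices of D; in particular every vertex of G has a neighbor in D, so the 1-neighborhood of D is all of V. -/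
open Finset Matrix

/-!
Let `z = 1_D - (|D|/|V|)·1`. The hypothesis says that `z` is orthogonal to every eigenvector of
`A` with nonzero eigenvalue: an eigenvector `x` differs from one with zero sum only by a constant,
which `z` does not see, and on zero-sum vectors `⟪z, x⟫ = ∑_{v∈D} x v`. Since `A` is symmetric,
its eigenvectors span, so `z ⊥ range A` and hence `A z = 0`. Reading `A z = 0` at a vertex `v`
says that `v` has exactly `d·|D|/|V|` neighbours in `D`.
-/

namespace LinearMap.IsSymmetric

variable {𝕜 E : Type*} [RCLike 𝕜] [NormedAddCommGroup E] [InnerProductSpace 𝕜 E]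
  [FiniteDimensional 𝕜 E] {T : E →ₗ[𝕜] E}

theorem inner_apply_eq_zero_of_orthogonal_eigenspaces (hT : T.IsSymmetric) {z : E}
    (hz : ∀ μ : 𝕜, μ ≠ 0 → ∀ x ∈ Module.End.eigenspace T μ, inner 𝕜 z x = 0) (w : E) :
    inner 𝕜 z (T w) = 0 := by
  have hw : w ∈ ⨆ μ, Module.End.eigenspace T μ := by
    rw [Submodule.orthogonal_eq_bot_iff.mp hT.orthogonalComplement_iSup_eigenspaces_eq_bot]
    exact Submodule.mem_top
  refine Submodule.iSup_induction (motive := fun w => inner 𝕜 z (T w) = 0) _ hw ?_ ?_ ?_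
  · intro μ x hx
    rw [Module.End.mem_eigenspace_iff.mp hx, inner_smul_right]
    rcases eq_or_ne μ 0 with rfl | hμ
    · exact zero_mul _
    · rw [hz μ hμ x hx, mul_zero]
  · simp
  · intro x y hx hy
    rw [map_add, inner_add_right, hx, hy, add_zero]

theorem apply_eq_zero_of_orthogonal_eigenspaces (hT : T.IsSymmetric) {z : E}
    (hz : ∀ μ : 𝕜, μ ≠ 0 → ∀ x ∈ Module.End.eigenspace T μ, inner 𝕜 z x = 0) : T z = 0 :=
  inner_self_eq_zero.mp <|
    (hT z (T z)).trans (hT.inner_apply_eq_zero_of_orthogonal_eigenspaces hz _)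

end LinearMap.IsSymmetric

theorem Matrix.IsHermitian.mulVec_eq_zero_of_orthogonal_eigenvectors {𝕜 n : Type*} [RCLike 𝕜]
    [Fintype n] {A : Matrix n n 𝕜} (hA : A.IsHermitian) {z : n → 𝕜}
    (hz : ∀ μ : 𝕜, μ ≠ 0 → ∀ x, A *ᵥ x = μ • x → star z ⬝ᵥ x = 0) : A *ᵥ z = 0 := by
  classical
  refine congrArg WithLp.ofLp <| (isSymmetric_toEuclideanLin_iff.mpr hA)
    |>.apply_eq_zero_of_orthogonal_eigenspaces (z := WithLp.toLp 2 z) fun μ hμ x hx => ?_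
  rw [EuclideanSpace.inner_eq_star_dotProduct, dotProduct_comm]
  exact hz μ hμ _ (congrArg WithLp.ofLp (Module.End.mem_eigenspace_iff.mp hx))

theorem Fintype.sum_sub_mean_eq_zero {V R : Type*} [Fintype V] [Field R] [CharZero R]
    (x : V → R) : ∑ v, (x - Function.const V ((∑ u, x u) / Fintype.card V)) v = 0 := by
  rcases isEmpty_or_nonempty V with hV | hV
  · simp
  · have hn : (Fintype.card V : R) ≠ 0 := Nat.cast_ne_zero.mpr Fintype.card_ne_zero
    simp [Finset.sum_sub_distrib, mul_div_cancel₀ _ hn]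

namespace SimpleGraph

variable {V : Type*} [Fintype V] {G : SimpleGraph V} [DecidableRel G.Adj] {d : ℕ}

theorem IsRegularOfDegree.sum_adjMatrix_mulVec {R : Type*} [Semiring R]
    (hreg : G.IsRegularOfDegree d) (x : V → R) :
    ∑ v, (G.adjMatrix R *ᵥ x) v = d * ∑ v, x v := by
  have := dotProduct_mulVec (fun _ => (1 : R)) (G.adjMatrix R) x
  simp only [dotProduct, one_mul, adjMatrix_vecMul_apply, sum_const,
    card_neighborFinset_eq_degree, hreg _, nsmul_one] at this
  rw [this, mul_sum]

theorem IsRegularOfDegree.adjMatrix_mulVec_sub_mean {R : Type*} [Field R]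
    (hreg : G.IsRegularOfDegree d) {μ : R} {x : V → R} (hx : G.adjMatrix R *ᵥ x = μ • x) :
    let y := x - Function.const V ((∑ u, x u) / Fintype.card V)
    G.adjMatrix R *ᵥ y = μ • y := by
  set s := ∑ u, x u
  have hds : (d : R) * s = μ * s := by
    rw [← hreg.sum_adjMatrix_mulVec, hx]
    simp [s, mul_sum]
  ext v
  simp only [mulVec_sub, hx, Pi.sub_apply, Pi.smul_apply, smul_eq_mul,
    adjMatrix_mulVec_const_apply_of_regular hreg, Function.const_apply, mul_sub, ← mul_div_assoc,
    hds]

variable [DecidableEq V]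

noncomputable def centeredIndicator (D : Finset V) : V → ℝ :=
  fun v => (if v ∈ D then 1 else 0) - #D / Fintype.card V

theorem centeredIndicator_dotProduct (D : Finset V) (x : V → ℝ) :
    centeredIndicator D ⬝ᵥ x =
      ∑ v ∈ D, (x - Function.const V ((∑ u, x u) / Fintype.card V)) v := by
  simp only [centeredIndicator, dotProduct, sub_mul, ite_mul, one_mul, zero_mul, sum_sub_distrib,
    sum_ite_mem, univ_inter, Pi.sub_apply, Function.const_apply, sum_const, nsmul_eq_mul]
  rw [← mul_sum, div_mul_eq_mul_div, mul_div_assoc]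

theorem IsRegularOfDegree.adjMatrix_mulVec_centeredIndicator_apply
    (hreg : G.IsRegularOfDegree d) (D : Finset V) (v : V) :
    (G.adjMatrix ℝ *ᵥ centeredIndicator D) v =
      #{w ∈ D | G.Adj v w} - d * #D / Fintype.card V := by
  have hfilter : {u ∈ G.neighborFinset v | u ∈ D} = {w ∈ D | G.Adj v w} := by
    ext u
    simp [and_comm]
  rw [adjMatrix_mulVec_apply]
  simp only [centeredIndicator]
  rw [sum_sub_distrib, sum_boole, hfilter, sum_const,
    card_neighborFinset_eq_degree, hreg v, nsmul_eq_mul, mul_div_assoc]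

theorem IsRegularOfDegree.adjMatrix_mulVec_centeredIndicator_eq_zero
    (hreg : G.IsRegularOfDegree d) {D : Finset V}
    (hD : ∀ μ : ℝ, μ ≠ 0 → ∀ x : V → ℝ, G.adjMatrix ℝ *ᵥ x = μ • x →
        ∑ v, x v = 0 → ∑ v ∈ D, x v = 0) :
    G.adjMatrix ℝ *ᵥ centeredIndicator D = 0 :=
  (G.isHermitian_adjMatrix ℝ).mulVec_eq_zero_of_orthogonal_eigenvectors fun μ hμ x hx => by
    rw [star_trivial, centeredIndicator_dotProduct]
    exact hD μ hμ _ (hreg.adjMatrix_mulVec_sub_mean hx) (Fintype.sum_sub_mean_eq_zero x)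

end SimpleGraph

/-- If `G` is a `d`-regular graph and the nonempty set `D` averages every eigenvector
of the adjacency matrix with nonzero eigenvalue that is orthogonal to the all-ones
vector (i.e. `D` is an extremal design in random walk order), then
`m = d·|D|/|V|` is a positive integer and every vertex of `G` is adjacent to exactly
`m` vertices of `D`; in particular the 1-neighborhood of `D` is all of `V`. -/
theorem extremal_random_walk_design_neighbors
    {V : Type*} [Fintype V] [DecidableEq V] (G : SimpleGraph V) [DecidableRel G.Adj]
    (d : ℕ) (hd : 1 ≤ d) (hreg : G.IsRegularOfDegree d)
    (D : Finset V) (hne : D.Nonempty)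
    (hD : ∀ μ : ℝ, μ ≠ 0 → ∀ x : V → ℝ, G.adjMatrix ℝ *ᵥ x = μ • x →
        ∑ v, x v = 0 → ∑ v ∈ D, x v = 0) :
    ∃ m : ℕ, 0 < m ∧ m * Fintype.card V = d * D.card ∧
      (∀ v : V, (D.filter fun w => G.Adj v w).card = m) ∧
      (∀ v : V, ∃ w ∈ D, G.Adj v w) := by
  have hcount (v : V) : (#{w ∈ D | G.Adj v w} : ℝ) = d * #D / Fintype.card V := by
    have := congrFun (hreg.adjMatrix_mulVec_centeredIndicator_eq_zero hD) v
    rwa [hreg.adjMatrix_mulVec_centeredIndicator_apply, Pi.zero_apply, sub_eq_zero] at this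
  obtain ⟨w₀, hw₀⟩ := hne
  set m := #{w ∈ D | G.Adj w₀ w}
  have hall (v : V) : #{w ∈ D | G.Adj v w} = m := by
    exact_mod_cast (hcount v).trans (hcount w₀).symm
  have hmn : m * Fintype.card V = d * #D := by
    have : Nonempty V := ⟨w₀⟩
    have hV : (Fintype.card V : ℝ) ≠ 0 := Nat.cast_ne_zero.mpr Fintype.card_ne_zero
    have := hcount w₀
    rw [eq_div_iff hV] at this
    exact_mod_cast this
  have hm : 0 < m :=
    Nat.pos_of_mul_pos_right (hmn ▸ Nat.mul_pos hd (card_pos.mpr ⟨w₀, hw₀⟩))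
  refine ⟨m, hm, hmn, hall, fun v => ?_⟩
  obtain ⟨w, hw⟩ := card_pos.mp ((hall v).symm ▸ hm)
  exact ⟨w, (mem_filter.mp hw).1, (mem_filter.mp hw).2⟩
end

section
/- Let n ≥ 2 be even and let D ⊆ (ℤ/2ℤ)^n be nonempty with ∑_{x∈D} (−1)^{y·x} = 0 for every y ∈ (ℤ/2ℤ)^n whose Hamming weight |y| satisfies |y| ≠ 0 and |y| ≠ n/2. Then 2^n divides n·|D|; consequently, if n = 2^t · b with b odd, then |D| ≥ 2^{n−t}. -/
/-!
Weight the Fourier coefficients `∑_{x ∈ D} χ_y(x)` of `D` by the adjacency eigenvalues `n - 2|y|`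
and sum over `y`. By the design hypothesis only `y = 0` survives (the eigenvalue vanishes at
`|y| = n/2`), so the sum is `n·|D|`. On the other hand `n - 2|y| = ∑_i χ_y(e_i)`, and orthogonality
of characters turns the sum into `2^n` times the number of unit vectors `e_i` lying in `D`.
-/

open Finset

namespace ZMod

lemma eq_zero_or_eq_one_of_two (a : ZMod 2) : a = 0 ∨ a = 1 := by
  decide +revert

lemma sum_univ_two {M : Type*} [AddCommMonoid M] (f : ZMod 2 → M) :
    ∑ a, f a = f 0 + f 1 :=
  Fintype.sum_eq_add 0 1 zero_ne_one fun a ha ↦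
    (ha.2 (a.eq_zero_or_eq_one_of_two.resolve_left ha.1)).elim

lemma neg_one_pow_val_mul_add (a b c : ZMod 2) :
    (-1 : ℝ) ^ (a.val * (b + c).val) = (-1) ^ (a.val * b.val) * (-1) ^ (a.val * c.val) := by
  rw [← pow_add, ← mul_add, neg_one_pow_eq_pow_mod_two, val_add, Nat.mul_mod_mod,
    ← neg_one_pow_eq_pow_mod_two]

lemma sum_neg_one_pow_val_mul (b : ZMod 2) :
    ∑ a : ZMod 2, (-1 : ℝ) ^ (a.val * b.val) = if b = 0 then 2 else 0 := by
  rcases b.eq_zero_or_eq_one_of_two with rfl | rfl <;> simp [sum_univ_two, val_one]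

lemma neg_one_pow_val (a : ZMod 2) : (-1 : ℝ) ^ a.val = 1 - 2 * if a ≠ 0 then 1 else 0 := by
  rcases a.eq_zero_or_eq_one_of_two with rfl | rfl <;> norm_num [val_one]

end ZMod

namespace Hypercube

open ZMod

variable {n : ℕ}

noncomputable def walsh (y x : Fin n → ZMod 2) : ℝ := (-1) ^ (∑ i, (y i).val * (x i).val)

lemma walsh_eq_prod (y x : Fin n → ZMod 2) :
    walsh y x = ∏ i, (-1 : ℝ) ^ ((y i).val * (x i).val) :=
  (prod_pow_eq_pow_sum _ _ _).symm

lemma walsh_add_right (y x x' : Fin n → ZMod 2) :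
    walsh y (x + x') = walsh y x * walsh y x' := by
  simp only [walsh_eq_prod, Pi.add_apply, neg_one_pow_val_mul_add, prod_mul_distrib]

lemma sum_walsh_left (x : Fin n → ZMod 2) :
    ∑ y, walsh y x = if x = 0 then 2 ^ n else 0 := by
  simp_rw [walsh_eq_prod]
  rw [← Fintype.prod_sum fun i (a : ZMod 2) ↦ (-1 : ℝ) ^ (a.val * (x i).val)]
  simp only [sum_neg_one_pow_val_mul, Fintype.prod_ite_zero,
    prod_const, card_univ, Fintype.card_fin, funext_iff, Pi.zero_apply]

lemma walsh_single_right (y : Fin n → ZMod 2) (i : Fin n) :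
    walsh y (Pi.single i 1) = (-1) ^ (y i).val := by
  rw [walsh, Fintype.sum_eq_single i] <;> simp +contextual [val_one]

lemma sum_walsh_single_right (y : Fin n → ZMod 2) :
    ∑ i, walsh y (Pi.single i 1) = n - 2 * hammingNorm y := by
  simp only [walsh_single_right, neg_one_pow_val, sum_sub_distrib, ← mul_sum, sum_boole,
    hammingNorm]
  simp

lemma single_add_eq_zero_iff (i : Fin n) (x : Fin n → ZMod 2) :
    Pi.single i 1 + x = 0 ↔ x = Pi.single i 1 := by
  rw [add_eq_zero_iff_eq_neg', ← Pi.single_neg, neg_eq_self_mod_two]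

lemma sum_eigenvalue_mul_sum_walsh (D : Finset (Fin n → ZMod 2)) :
    ∑ y, ((n : ℝ) - 2 * hammingNorm y) * ∑ x ∈ D, walsh y x
      = 2 ^ n * #{i | Pi.single i 1 ∈ D} := by
  calc ∑ y, ((n : ℝ) - 2 * hammingNorm y) * ∑ x ∈ D, walsh y x
      = ∑ y, ∑ i, ∑ x ∈ D, walsh y (Pi.single i 1 + x) := by
        simp only [← sum_walsh_single_right, sum_mul_sum, walsh_add_right]
    _ = ∑ i, ∑ x ∈ D, ∑ y, walsh y (Pi.single i 1 + x) := by
        rw [sum_comm]; simp only [sum_comm (s := univ) (t := D)]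
    _ = ∑ i, if Pi.single i 1 ∈ D then (2 : ℝ) ^ n else 0 := by
        simp only [sum_walsh_left, single_add_eq_zero_iff, sum_ite_eq']
    _ = 2 ^ n * #{i | Pi.single i 1 ∈ D} := by
        rw [sum_ite, sum_const_zero, add_zero, sum_const, nsmul_eq_mul, mul_comm]

lemma sum_eigenvalue_mul_sum_walsh_of_design (heven : Even n) {D : Finset (Fin n → ZMod 2)}
    (hD : ∀ y, hammingNorm y ≠ 0 → hammingNorm y ≠ n / 2 → ∑ x ∈ D, walsh y x = 0) :
    ∑ y, ((n : ℝ) - 2 * hammingNorm y) * ∑ x ∈ D, walsh y x = n * #D := by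
  rw [sum_eq_single 0 _ (by simp)]
  · simp [walsh]
  intro y _ hy
  by_cases hhalf : hammingNorm y = n / 2
  · have hn : (n : ℝ) = 2 * (n / 2 : ℕ) := by
      exact_mod_cast (Nat.two_mul_div_two_of_even heven).symm
    rw [hhalf, ← hn, sub_self, zero_mul]
  · rw [hD y (hammingNorm_ne_zero_iff.mpr hy) hhalf, mul_zero]

end Hypercube

lemma Nat.pow_sub_dvd_of_pow_dvd_pow_mul {p n t b m : ℕ} (hp : 0 < p) (hpb : p.Coprime b)
    (h : p ^ n ∣ p ^ t * b * m) : p ^ (n - t) ∣ m := by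
  rcases le_total t n with htn | hnt
  · rw [← Nat.sub_add_cancel htn, pow_add, mul_comm, mul_assoc] at h
    exact (Nat.Coprime.pow_left _ hpb).dvd_of_dvd_mul_left
      (Nat.dvd_of_mul_dvd_mul_left (pow_pos hp t) h)
  · simp [Nat.sub_eq_zero_of_le hnt]

theorem hypercube_extremal_random_walk_design_bound_general
    (n : ℕ) (heven : Even n)
    (D : Finset (Fin n → ZMod 2)) (hne : D.Nonempty)
    (hD : ∀ y : Fin n → ZMod 2, hammingNorm y ≠ 0 → hammingNorm y ≠ n / 2 →
        ∑ x ∈ D, (-1 : ℝ) ^ (∑ i, (y i).val * (x i).val) = 0) :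
    2 ^ n ∣ n * D.card ∧
      ∀ t b : ℕ, Odd b → n = 2 ^ t * b → 2 ^ (n - t) ≤ D.card := by
  have hcount : n * #D = 2 ^ n * #{i | Pi.single i (1 : ZMod 2) ∈ D} := by
    exact_mod_cast (Hypercube.sum_eigenvalue_mul_sum_walsh_of_design heven hD).symm.trans
      (Hypercube.sum_eigenvalue_mul_sum_walsh D)
  refine ⟨Dvd.intro _ hcount.symm, fun t b hb hnb ↦ ?_⟩
  have hdvd : 2 ^ n ∣ 2 ^ t * b * #D := by
    rw [← hnb]
    exact Dvd.intro _ hcount.symm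
  exact Nat.le_of_dvd hne.card_pos
    (Nat.pow_sub_dvd_of_pow_dvd_pow_mul two_pos (Nat.coprime_two_left.mpr hb) hdvd)

/-- For even `n`, if `D ⊆ (ℤ/2ℤ)^n` is a nonempty extremal design of the hypercube
`H(n,2)` in random walk order — it averages every eigenvector `χ_y` with
`|y| ≠ 0` and `|y| ≠ n/2` — then `2^n` divides `n·|D|`; consequently if `n = 2^t·b`
with `b` odd then `|D| ≥ 2^{n−t}`. -/
theorem hypercube_extremal_random_walk_design_bound
    (n : ℕ) (hn : 2 ≤ n) (heven : Even n)
    (D : Finset (Fin n → ZMod 2)) (hne : D.Nonempty)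
    (hD : ∀ y : Fin n → ZMod 2, hammingNorm y ≠ 0 → hammingNorm y ≠ n / 2 →
        ∑ x ∈ D, (-1 : ℝ) ^ (∑ i, (y i).val * (x i).val) = 0) :
    2 ^ n ∣ n * D.card ∧
      ∀ t b : ℕ, Odd b → n = 2 ^ t * b → 2 ^ (n - t) ≤ D.card :=
  hypercube_extremal_random_walk_design_bound_general n heven D hne hD
end

section
/- Let 1 ≤ t ≤ k and 2k ≤ n. A subset D of the k-element subsets of {1,…,n} is a combinatorial t-design — i.e., there exists λ such that every t-element subset of {1,…,n} is contained in exactly λ members of D — if and only if ∑_{S∈D} φ(S) = 0 for every eigenvector φ of the graph Laplacian of the Johnson graph J(n,k) whose eigenvalue μ satisfies 0 < μ ≤ t(n+1−t). -/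
open Finset Matrix

/-- The Johnson graph `J(n,k)`: vertices are the `k`-element subsets of `{1,…,n}`,
two distinct vertices adjacent exactly when their intersection has `k−1` elements. -/
def johnsonGraph (n k : ℕ) : SimpleGraph {S : Finset (Fin n) // S.card = k} where
  Adj S T := S ≠ T ∧ (S.1 ∩ T.1).card = k - 1
  symm := ⟨fun S T h => ⟨Ne.symm h.1, by rw [Finset.inter_comm]; exact h.2⟩⟩
  loopless := ⟨fun S h => h.1 rfl⟩

instance (n k : ℕ) : DecidableRel (johnsonGraph n k).Adj :=
  fun S T => inferInstanceAs (Decidable (S ≠ T ∧ (S.1 ∩ T.1).card = k - 1))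

/-!
Let `U` and `D` be the raising and lowering operators on functions of subsets of `Fin n`,
`(U x) S = ∑_{z ∈ S} x (S \ {z})` and `(D x) T = ∑_{y ∉ T} x (T ∪ {y})`, and let
`λ_j = j (n + 1 - j)`. They are adjoint, and `DU - UD = n - 2j` on functions supported on `j`-sets.
On `k`-sets the Laplacian of `J(n,k)` is `λ_k - UD`, and `(U^a g) S = a! ∑_{T ⊆ S, |T| = t} g T`
for `|S| = t + a`; so with `a = k - t`, the sum of `U^a g` over `D` only depends on how many blocks
contain each `t`-set.

For an eigenvector `φ` with eigenvalue `μ ≤ λ_t`, the commutation relation gives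
`U^a D^a φ = ∏_{i < a} (λ_{t+i+1} - μ) φ` with a positive coefficient, and for a `t`-design the
sum of `U^a D^a φ` over `D` is a multiple of `∑ D^a φ`, which vanishes together with `∑ φ`.

Conversely, for `g = δ_T - δ_{T₀}` with `|T| = |T₀| = t`, the relation
`(L - λ_j) U^a g' = -U^{a+1} D g'` for `g'` supported on `j`-sets shows that `U^a g` is killed by
`∏_{j=1}^{t} (L - λ_j)`. It is therefore a sum of eigenvectors with eigenvalues in `(0, λ_t]`, so
`D` averages it, which says that `T` and `T₀` lie in the same number of blocks.
-/

namespace Finset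

variable {α : Type*} [DecidableEq α] {s : Finset α} {y z : α}

lemma sdiff_insert_erase (hz : z ∈ s) (hy : y ∉ s) : s \ insert y (s.erase z) = {z} := by
  ext a
  simp only [mem_sdiff, mem_insert, mem_erase, mem_singleton]
  grind

lemma insert_erase_sdiff (hy : y ∉ s) : insert y (s.erase z) \ s = {y} := by
  ext a
  simp only [mem_sdiff, mem_insert, mem_erase, mem_singleton]
  grind

lemma card_insert_erase (hz : z ∈ s) (hy : y ∉ s) : (insert y (s.erase z)).card = s.card := by
  rw [card_insert_of_notMem (fun h => hy (mem_of_mem_erase h)), card_erase_add_one hz]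

lemma eq_insert_erase_of_sdiff_eq {t : Finset α} (hz : s \ t = {z}) (hy : t \ s = {y}) :
    t = insert y (s.erase z) := by
  ext a
  have hza := congrArg (a ∈ ·) hz
  have hya := congrArg (a ∈ ·) hy
  simp only [mem_sdiff, mem_singleton, eq_iff_iff] at hza hya
  simp only [mem_insert, mem_erase]
  tauto

end Finset

open Polynomial in
lemma Module.End.ker_aeval_prod_X_sub_C_le {K V ι : Type*} [Field K] [AddCommGroup V]
    [Module K V] (f : Module.End K V) {s : Finset ι} {μ : ι → K} (hμ : Set.InjOn μ s)
    {W : Submodule K V} (h : ∀ i ∈ s, f.eigenspace (μ i) ≤ W) :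
    LinearMap.ker (aeval f (∏ i ∈ s, (X - C (μ i)))) ≤ W := by
  classical
  induction s using Finset.induction_on with
  | empty => simp [Module.End.one_eq_id]
  | insert i s hi ih =>
    have hcop : IsCoprime (X - C (μ i)) (∏ j ∈ s, (X - C (μ j))) :=
      IsCoprime.prod_right fun j hj => isCoprime_X_sub_C_of_isUnit_sub <| IsUnit.mk0 _ <|
        sub_ne_zero.2 <| hμ.ne (mem_insert_self i s) (mem_insert_of_mem hj)
          fun hij => hi (hij ▸ hj)
    rw [prod_insert hi, ← sup_ker_aeval_eq_ker_aeval_mul_of_coprime f hcop, sup_le_iff]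
    refine ⟨?_, ih (hμ.mono (subset_insert i s))
      fun j hj => h j (mem_insert_of_mem hj)⟩
    rw [map_sub, aeval_X, aeval_C, Algebra.algebraMap_eq_smul_one, ← Module.End.eigenspace_def]
    exact h i (mem_insert_self i s)

lemma SimpleGraph.sum_eq_zero_of_lapMatrix_mulVec_eq_smul_s11 {V R : Type*} [Fintype V]
    [DecidableEq V] [CommRing R] [NoZeroDivisors R] (G : SimpleGraph V) [DecidableRel G.Adj]
    {μ : R} (hμ : μ ≠ 0) {φ : V → R} (h : G.lapMatrix R *ᵥ φ = μ • φ) :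
    ∑ v, φ v = 0 := by
  have hsum : (fun _ => (1 : R)) ⬝ᵥ (G.lapMatrix R *ᵥ φ) = 0 := by
    rw [dotProduct_mulVec, ← mulVec_transpose, (G.isSymm_lapMatrix (R := R)).eq,
      G.lapMatrix_mulVec_const_eq_zero, zero_dotProduct]
  rw [h, dotProduct_smul, smul_eq_mul, mul_eq_zero] at hsum
  simpa [dotProduct] using hsum.resolve_left hμ

namespace Johnson

def eigenvalue (n j : ℕ) : ℝ := j * (n + 1 - j)

lemma eigenvalue_succ_sub (n j : ℕ) :
    eigenvalue n (j + 1) - (n - 2 * j) = eigenvalue n j := by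
  unfold eigenvalue
  push_cast
  ring

lemma eigenvalue_lt_eigenvalue {n i j : ℕ} (hij : i < j) (hn : i + j ≤ n) :
    eigenvalue n i < eigenvalue n j := by
  have hij : (i : ℝ) < j := by exact_mod_cast hij
  have hn : (i : ℝ) + j ≤ n := by exact_mod_cast hn
  unfold eigenvalue
  nlinarith

lemma eigenvalue_strictMonoOn {n : ℕ} : StrictMonoOn (eigenvalue n) {j | 2 * j ≤ n} :=
  fun _ _ _ (hj : 2 * _ ≤ n) hij => eigenvalue_lt_eigenvalue hij (by omega)

lemma eigenvalue_pos {n j : ℕ} (hj : 0 < j) (hn : j ≤ n) : 0 < eigenvalue n j := by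
  simpa [eigenvalue] using eigenvalue_lt_eigenvalue hj (by omega : 0 + j ≤ n)

section UpDown

variable {α : Type*}

def level (j : ℕ) : Submodule ℝ (Finset α → ℝ) where
  carrier := {x | ∀ T, T.card ≠ j → x T = 0}
  add_mem' hx hy T hT := by simp [hx T hT, hy T hT]
  zero_mem' _ _ := rfl
  smul_mem' c x hx T hT := by simp [hx T hT]

variable {j : ℕ} {x : Finset α → ℝ}

lemma sum_powersetCard_univ_of_mem_level [Fintype α] {t : ℕ} {g : Finset α → ℝ}
    (hg : g ∈ level t) : ∑ T ∈ univ.powersetCard t, g T = ∑ T, g T :=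
  sum_subset (subset_univ _) fun T _ hT => hg T (by simpa using hT)

lemma sum_comp_val_of_mem_level [Fintype α] {k : ℕ} (hx : x ∈ level k) :
    ∑ S : {S : Finset α // S.card = k}, x S.1 = ∑ T, x T := by
  rw [← Fintype.sum_subtype_add_sum_subtype (fun T => T.card = k) x, left_eq_add]
  exact sum_eq_zero fun T _ => hx T.1 T.2

lemma extend_val_mem_level {k : ℕ} (φ : {S : Finset α // S.card = k} → ℝ) :
    Function.extend Subtype.val φ 0 ∈ level k := by
  intro T hT
  rw [Function.extend_apply']
  · rfl
  · rintro ⟨S, rfl⟩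
    exact hT S.2

variable [DecidableEq α]

def up : Module.End ℝ (Finset α → ℝ) where
  toFun x S := ∑ a ∈ S, x (S.erase a)
  map_add' x y := by ext; simp [sum_add_distrib]
  map_smul' c x := by ext; simp [mul_sum]

lemma up_apply (x : Finset α → ℝ) (S : Finset α) : up x S = ∑ a ∈ S, x (S.erase a) := rfl

lemma up_mem_level (hx : x ∈ level j) : up x ∈ level (j + 1) := by
  intro S hS
  refine sum_eq_zero fun a ha => hx _ ?_
  have := card_erase_add_one ha
  omega

lemma up_pow_mem_level (hx : x ∈ level j) (a : ℕ) :
    (up ^ a) x ∈ level (j + a) := by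
  induction a with
  | zero => exact hx
  | succ a ih => rw [pow_succ', Module.End.mul_apply]; exact up_mem_level ih

lemma up_pow_apply {m a : ℕ} (g : Finset α → ℝ) {S : Finset α} (hS : S.card = m + a) :
    (up ^ a) g S = a.factorial * ∑ T ∈ S.powersetCard m, g T := by
  induction a generalizing S with
  | zero =>
    rw [add_zero] at hS
    simp [← hS, powersetCard_self]
  | succ a ih =>
    have herase : ∀ z ∈ S, (S.erase z).card = m + a := fun z hz => by
      rw [card_erase_of_mem hz, hS]
      rfl
    rw [pow_succ', Module.End.mul_apply, up_apply, sum_congr rfl fun z hz => ih (herase z hz),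
      ← mul_sum, sum_comm' (t' := S.powersetCard m) (s' := fun T => S \ T)]
    · have hcard : ∀ T ∈ S.powersetCard m, (S \ T).card = a + 1 := fun T hT => by
        rw [mem_powersetCard] at hT
        rw [card_sdiff_of_subset hT.1, hS, hT.2]
        omega
      simp only [sum_const, nsmul_eq_mul, mul_sum]
      refine sum_congr rfl fun T hT => ?_
      rw [hcard T hT, Nat.factorial_succ]
      push_cast
      ring
    · intro z T
      simp only [mem_powersetCard, mem_sdiff, subset_erase]
      tauto

variable [Fintype α]

def down : Module.End ℝ (Finset α → ℝ) where
  toFun x T := ∑ a ∈ Tᶜ, x (insert a T)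
  map_add' x y := by ext; simp [sum_add_distrib]
  map_smul' c x := by ext; simp [mul_sum]

lemma down_apply (x : Finset α → ℝ) (T : Finset α) :
    down x T = ∑ a ∈ Tᶜ, x (insert a T) := rfl

-- For `j = 0` the truncated `j - 1` is harmless: `down` kills functions supported on `∅`.
lemma down_mem_level (hx : x ∈ level j) : down x ∈ level (j - 1) := by
  intro T hT
  refine sum_eq_zero fun a ha => hx _ ?_
  rw [card_insert_of_notMem (mem_compl.1 ha)]
  omega

lemma down_pow_mem_level (hx : x ∈ level j) (a : ℕ) :
    (down ^ a) x ∈ level (j - a) := by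
  induction a with
  | zero => exact hx
  | succ a ih => rw [pow_succ', Module.End.mul_apply]; exact down_mem_level ih

lemma dotProduct_down (x y : Finset α → ℝ) : down x ⬝ᵥ y = x ⬝ᵥ up y := by
  simp only [dotProduct, down_apply, up_apply, sum_mul, mul_sum]
  rw [sum_sigma', sum_sigma']
  refine sum_nbij' (fun p => ⟨insert p.2 p.1, p.2⟩) (fun p => ⟨p.1.erase p.2, p.2⟩)
    ?_ ?_ ?_ ?_ ?_ <;> rintro ⟨T, a⟩ h <;> simp_all [insert_erase]

lemma sum_down_of_mem_level (hx : x ∈ level j) :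
    ∑ T, down x T = j * ∑ T, x T := by
  have h := dotProduct_down x 1
  simp only [dotProduct, Pi.one_apply, mul_one, up_apply, sum_const, nsmul_eq_mul] at h
  rw [h, mul_sum]
  refine sum_congr rfl fun T _ => ?_
  by_cases hT : T.card = j
  · rw [hT, mul_comm]
  · simp [hx T hT]

lemma sum_down_pow_eq_zero (hx : x ∈ level j) (hsum : ∑ T, x T = 0) (a : ℕ) :
    ∑ T, (down ^ a) x T = 0 := by
  induction a with
  | zero => exact hsum
  | succ a ih =>
    rw [pow_succ', Module.End.mul_apply, sum_down_of_mem_level (down_pow_mem_level hx a), ih,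
      mul_zero]

lemma sum_up_pow_apply {ι : Type*} {t a : ℕ} (D : Finset ι) (s : ι → Finset α)
    (hs : ∀ i ∈ D, (s i).card = t + a) (g : Finset α → ℝ) :
    ∑ i ∈ D, (up ^ a) g (s i)
      = a.factorial * ∑ T ∈ univ.powersetCard t, (D.filter fun i => T ⊆ s i).card * g T := by
  rw [sum_congr rfl fun i hi => up_pow_apply g (hs i hi), ← mul_sum,
    sum_comm' (t' := univ.powersetCard t) (s' := fun T => D.filter fun i => T ⊆ s i)]
  · simp only [sum_const, nsmul_eq_mul]
  · intro i T
    simp only [mem_powersetCard, mem_filter, subset_univ, true_and]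
    tauto

lemma up_down_apply (x : Finset α → ℝ) (S : Finset α) :
    up (down x) S = S.card * x S + ∑ z ∈ S, ∑ y ∈ Sᶜ, x (insert y (S.erase z)) := by
  rw [up_apply, ← nsmul_eq_mul, ← sum_const, ← sum_add_distrib]
  refine sum_congr rfl fun z hz => ?_
  rw [down_apply, compl_erase, sum_insert (by simpa using hz), insert_erase hz]

lemma up_down_mem_level (hx : x ∈ level j) : up (down x) ∈ level j := by
  intro S hS
  rw [up_down_apply, hx S hS, mul_zero, zero_add]
  refine sum_eq_zero fun z hz => sum_eq_zero fun y hy => hx _ ?_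
  rwa [card_insert_erase hz (mem_compl.1 hy)]

lemma down_up_apply (x : Finset α → ℝ) (T : Finset α) :
    down (up x) T = Tᶜ.card * x T + ∑ z ∈ T, ∑ y ∈ Tᶜ, x (insert y (T.erase z)) := by
  rw [sum_comm, down_apply, ← nsmul_eq_mul, ← sum_const, ← sum_add_distrib]
  refine sum_congr rfl fun y hy => ?_
  have hyT : y ∉ T := mem_compl.1 hy
  rw [up_apply, sum_insert hyT, erase_insert hyT]
  congr 1
  refine sum_congr rfl fun z hz => ?_
  rw [erase_insert_of_ne (by rintro rfl; exact hyT hz)]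

lemma down_up_of_mem_level (hx : x ∈ level j) :
    down (up x) = up (down x) + ((Fintype.card α : ℝ) - 2 * j) • x := by
  ext T
  rw [down_up_apply, Pi.add_apply, up_down_apply, Pi.smul_apply, smul_eq_mul, card_compl]
  by_cases hT : T.card = j
  · subst hT
    push_cast [card_le_univ]
    ring
  · simp [hx T hT]

lemma up_down_up_pow (hx : x ∈ level j) (a : ℕ) :
    up (down ((up ^ a) x)) = (up ^ (a + 1)) (down x)
      + (a * ((Fintype.card α : ℝ) - 2 * j - a + 1)) • (up ^ a) x := by
  induction a with
  | zero => simp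
  | succ a ih =>
    rw [pow_succ' up a, Module.End.mul_apply, down_up_of_mem_level (up_pow_mem_level hx a), ih,
      map_add, map_add, map_smul, map_smul, ← Module.End.mul_apply, ← pow_succ', add_assoc,
      ← add_smul]
    push_cast
    ring_nf

lemma up_down_down {j : ℕ} {c : ℝ} {y : Finset α → ℝ} (hy : y ∈ level (j + 1))
    (h : up (down y) = c • y) :
    up (down (down y)) = (c - ((Fintype.card α : ℝ) - 2 * j)) • down y := by
  have hcomm := down_up_of_mem_level (j := j) (down_mem_level hy)
  rw [h, map_smul] at hcomm
  rw [sub_smul, hcomm, add_sub_cancel_right]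

lemma up_down_down_pow {j a : ℕ} {μ : ℝ} {x : Finset α → ℝ} (hx : x ∈ level (j + a))
    (h : up (down x) = (eigenvalue (Fintype.card α) (j + a) - μ) • x) :
    (down ^ a) x ∈ level j ∧
      up (down ((down ^ a) x)) = (eigenvalue (Fintype.card α) j - μ) • (down ^ a) x := by
  induction a generalizing j with
  | zero => exact ⟨hx, h⟩
  | succ a ih =>
    rw [← add_assoc, add_right_comm] at hx h
    obtain ⟨hlevel, heig⟩ := ih hx h
    rw [pow_succ', Module.End.mul_apply]
    refine ⟨down_mem_level hlevel, ?_⟩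
    rw [up_down_down hlevel heig, sub_right_comm, eigenvalue_succ_sub]

lemma up_pow_down_pow {j a : ℕ} {μ : ℝ} {x : Finset α → ℝ} (hx : x ∈ level (j + a))
    (h : up (down x) = (eigenvalue (Fintype.card α) (j + a) - μ) • x) :
    (up ^ a) ((down ^ a) x)
      = (∏ i ∈ range a, (eigenvalue (Fintype.card α) (j + i + 1) - μ)) • x := by
  induction a generalizing j with
  | zero => simp
  | succ a ih =>
    rw [← add_assoc, add_right_comm] at hx h
    rw [pow_succ' down, pow_succ up, Module.End.mul_apply, Module.End.mul_apply,
      (up_down_down_pow hx h).2, map_smul, ih hx h, smul_smul,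
      prod_range_succ']
    simp only [add_zero, mul_comm]
    ring_nf

end UpDown

variable {n k : ℕ}

lemma johnsonGraph_adj_iff {S T : {S : Finset (Fin n) // S.card = k}} :
    (johnsonGraph n k).Adj S T ↔ ∃ z ∈ S.1, ∃ y ∉ S.1, T.1 = insert y (S.1.erase z) := by
  constructor
  · rintro ⟨hne, hcard⟩
    have hk : k ≠ 0 := by
      rintro rfl
      exact hne (Subtype.ext (by rw [card_eq_zero.1 S.2, card_eq_zero.1 T.2]))
    have hST := card_sdiff_add_card_inter S.1 T.1
    have hTS := card_sdiff_add_card_inter T.1 S.1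
    rw [inter_comm] at hTS
    obtain ⟨z, hz⟩ := card_eq_one.1 (show (S.1 \ T.1).card = 1 by rw [S.2] at hST; omega)
    obtain ⟨y, hy⟩ := card_eq_one.1 (show (T.1 \ S.1).card = 1 by rw [T.2] at hTS; omega)
    exact ⟨z, (mem_sdiff.1 (hz ▸ mem_singleton_self z)).1,
      y, (mem_sdiff.1 (hy ▸ mem_singleton_self y)).2, eq_insert_erase_of_sdiff_eq hz hy⟩
  · rintro ⟨z, hz, y, hy, hT⟩
    have hcard := card_sdiff_add_card_inter S.1 T.1
    rw [hT, sdiff_insert_erase hz hy, card_singleton, S.2] at hcard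
    refine ⟨fun h => hy ?_, ?_⟩
    · rw [h, hT]
      exact mem_insert_self _ _
    · show (S.1 ∩ T.1).card = k - 1
      rw [hT]
      omega

lemma sum_neighborFinset_johnsonGraph {M : Type*} [AddCommMonoid M]
    (S : {S : Finset (Fin n) // S.card = k}) (f : Finset (Fin n) → M) :
    ∑ T ∈ (johnsonGraph n k).neighborFinset S, f T.1
      = ∑ z ∈ S.1, ∑ y ∈ S.1ᶜ, f (insert y (S.1.erase z)) := by
  rw [← sum_product']
  symm
  refine sum_bij
    (fun p hp => ⟨insert p.2 (S.1.erase p.1), ?card⟩) ?mem ?inj ?surj (fun _ _ => rfl)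
  case card =>
    obtain ⟨hz, hy⟩ := mem_product.1 hp
    rw [card_insert_erase hz (mem_compl.1 hy), S.2]
  case mem =>
    rintro ⟨z, y⟩ hp
    obtain ⟨hz, hy⟩ := mem_product.1 hp
    exact (SimpleGraph.mem_neighborFinset _ _ _).2
      (johnsonGraph_adj_iff.2 ⟨z, hz, y, mem_compl.1 hy, rfl⟩)
  case inj =>
    rintro ⟨z₁, y₁⟩ hp₁ ⟨z₂, y₂⟩ hp₂ h
    obtain ⟨hz₁, hy₁⟩ := mem_product.1 hp₁
    obtain ⟨hz₂, hy₂⟩ := mem_product.1 hp₂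
    rw [mem_compl] at hy₁ hy₂
    have h : insert y₁ (S.1.erase z₁) = insert y₂ (S.1.erase z₂) := congrArg Subtype.val h
    have hz := congrArg (S.1 \ ·) h
    have hy := congrArg (· \ S.1) h
    simp only [sdiff_insert_erase hz₁ hy₁, sdiff_insert_erase hz₂ hy₂,
      insert_erase_sdiff hy₁, insert_erase_sdiff hy₂, singleton_inj] at hz hy
    rw [hz, hy]
  case surj =>
    intro T hT
    obtain ⟨z, hz, y, hy, hT⟩ :=
      johnsonGraph_adj_iff.1 ((SimpleGraph.mem_neighborFinset _ _ _).1 hT)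
    exact ⟨(z, y), mem_product.2 ⟨hz, mem_compl.2 hy⟩, Subtype.ext hT.symm⟩

lemma degree_johnsonGraph (S : {S : Finset (Fin n) // S.card = k}) :
    (johnsonGraph n k).degree S = k * (n - k) := by
  rw [← SimpleGraph.card_neighborFinset_eq_degree, card_eq_sum_ones,
    sum_neighborFinset_johnsonGraph S fun _ => 1]
  simp [card_compl, S.2]

lemma lapMatrix_mulVec_comp_val (x : Finset (Fin n) → ℝ) :
    (johnsonGraph n k).lapMatrix ℝ *ᵥ (fun S => x S.1)
      = fun S => eigenvalue n k * x S.1 - up (down x) S.1 := by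
  ext S
  have hk : k ≤ n := S.2 ▸ (card_le_univ S.1).trans_eq (Fintype.card_fin n)
  rw [SimpleGraph.lapMatrix_mulVec_apply, degree_johnsonGraph, sum_neighborFinset_johnsonGraph S x,
    up_down_apply, S.2, eigenvalue]
  push_cast [hk]
  ring

lemma up_down_extend_val {μ : ℝ} {φ : {S : Finset (Fin n) // S.card = k} → ℝ}
    (h : (johnsonGraph n k).lapMatrix ℝ *ᵥ φ = μ • φ) :
    up (down (Function.extend Subtype.val φ 0))
      = (eigenvalue n k - μ) • Function.extend Subtype.val φ 0 := by
  set x := Function.extend Subtype.val φ 0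
  have hx : x ∈ level k := extend_val_mem_level φ
  have hφ : φ = fun S => x S.1 := funext fun S => (Subtype.val_injective.extend_apply φ 0 S).symm
  ext T
  by_cases hT : T.card = k
  · have := congrFun h ⟨T, hT⟩
    rw [hφ, lapMatrix_mulVec_comp_val] at this
    simp only [Pi.smul_apply, smul_eq_mul] at this ⊢
    linarith
  · rw [Pi.smul_apply, up_down_mem_level hx T hT, hx T hT, smul_zero]

lemma lapMatrix_mulVec_up_pow {j a : ℕ} (hk : j + a = k) {g : Finset (Fin n) → ℝ}
    (hg : g ∈ level j) :
    (johnsonGraph n k).lapMatrix ℝ *ᵥ (fun S => (up ^ a) g S.1)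
      = eigenvalue n j • (fun S => (up ^ a) g S.1) - fun S => (up ^ (a + 1)) (down g) S.1 := by
  rw [lapMatrix_mulVec_comp_val, up_down_up_pow hg, Fintype.card_fin, ← hk]
  ext S
  simp only [Pi.add_apply, Pi.smul_apply, Pi.sub_apply, smul_eq_mul, eigenvalue]
  push_cast
  ring

lemma sum_eq_zero_of_design {t lam : ℕ} (htk : t ≤ k) (hkn : 2 * k ≤ n)
    {D : Finset {S : Finset (Fin n) // S.card = k}}
    (hD : ∀ T : Finset (Fin n), T.card = t → (D.filter fun S => T ⊆ S.1).card = lam)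
    {μ : ℝ} (hμ : 0 < μ) (hμt : μ ≤ eigenvalue n t)
    {φ : {S : Finset (Fin n) // S.card = k} → ℝ}
    (h : (johnsonGraph n k).lapMatrix ℝ *ᵥ φ = μ • φ) : ∑ S ∈ D, φ S = 0 := by
  obtain ⟨a, rfl⟩ := Nat.exists_eq_add_of_le htk
  set x := Function.extend Subtype.val φ 0
  have hx : x ∈ level (t + a) := extend_val_mem_level φ
  have hφ : ∀ S, x S.1 = φ S := Subtype.val_injective.extend_apply φ 0
  have hsum : ∑ T, x T = 0 := by
    rw [← sum_comp_val_of_mem_level hx]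
    simpa only [hφ] using
      (johnsonGraph n (t + a)).sum_eq_zero_of_lapMatrix_mulVec_eq_smul_s11 hμ.ne' h
  have hUD : up (down x) = (eigenvalue (Fintype.card (Fin n)) (t + a) - μ) • x := by
    rw [Fintype.card_fin]
    exact up_down_extend_val h
  have hlevel : (down ^ a) x ∈ level t := by simpa using down_pow_mem_level hx a
  have hP : 0 < ∏ i ∈ range a, (eigenvalue n (t + i + 1) - μ) :=
    prod_pos fun i hi => sub_pos.2 <| hμt.trans_lt <|
      eigenvalue_lt_eigenvalue (by omega) (by rw [mem_range] at hi; omega)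
  have key : (∏ i ∈ range a, (eigenvalue n (t + i + 1) - μ)) * ∑ S ∈ D, φ S
      = a.factorial * lam * ∑ T, (down ^ a) x T := by
    calc _ = ∑ S ∈ D, (up ^ a) ((down ^ a) x) S.1 := by
          simp only [up_pow_down_pow hx hUD, Fintype.card_fin, mul_sum, Pi.smul_apply,
            smul_eq_mul, hφ]
      _ = a.factorial * ∑ T ∈ univ.powersetCard t, (lam : ℝ) * (down ^ a) x T := by
          rw [sum_up_pow_apply D Subtype.val fun S _ => S.2]
          refine congrArg _ (sum_congr rfl fun T hT => ?_)
          rw [hD T (mem_powersetCard_univ.1 hT)]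
      _ = _ := by rw [← mul_sum, sum_powersetCard_univ_of_mem_level hlevel, mul_assoc]
  rw [sum_down_pow_eq_zero hx hsum, mul_zero] at key
  exact (mul_eq_zero.1 key).resolve_left hP.ne'

open Polynomial in
lemma aeval_lapMatrix_up_pow_eq_zero {m a : ℕ} (hk : m + a = k) {g : Finset (Fin n) → ℝ}
    (hg : g ∈ level m) (hsum : ∑ T, g T = 0) :
    aeval (Matrix.toLin' ((johnsonGraph n k).lapMatrix ℝ))
      (∏ i ∈ range m, (X - C (eigenvalue n (i + 1)))) (fun S => (up ^ a) g S.1) = 0 := by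
  induction m generalizing a g with
  | zero =>
    have hg0 : g = 0 := by
      ext T
      by_cases hT : T = ∅
      · subst hT
        rwa [sum_eq_single ∅ (fun T _ hT => hg T (card_ne_zero.2
          (nonempty_iff_ne_empty.2 hT))) (by simp)] at hsum
      · exact hg T (card_ne_zero.2 (nonempty_iff_ne_empty.2 hT))
    rw [prod_range_zero, map_one, Module.End.one_apply, hg0]
    ext S
    simp
  | succ m ih =>
    rw [prod_range_succ, map_mul, Module.End.mul_apply, map_sub, aeval_X, aeval_C,
      LinearMap.sub_apply, Matrix.toLin'_apply, lapMatrix_mulVec_up_pow (by omega) hg,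
      Algebra.algebraMap_eq_smul_one, LinearMap.smul_apply, Module.End.one_apply,
      sub_sub_cancel_left, map_neg, ih (by omega) (by simpa using down_mem_level hg)
        (by rw [sum_down_of_mem_level hg, hsum, mul_zero]), neg_zero]

open Polynomial in
lemma sum_up_pow_eq_zero {t a : ℕ} (hkn : 2 * (t + a) ≤ n)
    {D : Finset {S : Finset (Fin n) // S.card = t + a}}
    (h : ∀ μ : ℝ, 0 < μ → μ ≤ eigenvalue n t →
      ∀ φ : {S : Finset (Fin n) // S.card = t + a} → ℝ,
        (johnsonGraph n (t + a)).lapMatrix ℝ *ᵥ φ = μ • φ → ∑ S ∈ D, φ S = 0)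
    {g : Finset (Fin n) → ℝ} (hg : g ∈ level t) (hsum : ∑ T, g T = 0) :
    ∑ S ∈ D, (up ^ a) g S.1 = 0 := by
  have hmaps : Set.MapsTo (· + 1) (range t : Set ℕ) {j | 2 * j ≤ n} := fun i hi => by
    rw [coe_range, Set.mem_Iio] at hi
    show 2 * (i + 1) ≤ n
    omega
  have hle := Module.End.ker_aeval_prod_X_sub_C_le
    (Matrix.toLin' ((johnsonGraph n (t + a)).lapMatrix ℝ))
    (eigenvalue_strictMonoOn.injOn.comp (add_left_injective 1).injOn hmaps)
    (W := LinearMap.ker (∑ S ∈ D, LinearMap.proj S)) fun i hi φ hφ => by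
      rw [Module.End.mem_eigenspace_iff, Matrix.toLin'_apply] at hφ
      have hit := mem_range.1 hi
      have hle : eigenvalue n (i + 1) ≤ eigenvalue n t :=
        (eigenvalue_strictMonoOn.le_iff_le (hmaps hi) (show 2 * t ≤ n by omega)).2 hit
      simpa using h _ (eigenvalue_pos (by omega) (by omega)) hle φ hφ
  simpa using hle (aeval_lapMatrix_up_pow_eq_zero rfl hg hsum)

lemma exists_card_filter_eq_of_sum_eq_zero {t : ℕ} (htk : t ≤ k) (hkn : 2 * k ≤ n)
    {D : Finset {S : Finset (Fin n) // S.card = k}}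
    (h : ∀ μ : ℝ, 0 < μ → μ ≤ eigenvalue n t →
      ∀ φ : {S : Finset (Fin n) // S.card = k} → ℝ,
        (johnsonGraph n k).lapMatrix ℝ *ᵥ φ = μ • φ → ∑ S ∈ D, φ S = 0) :
    ∃ lam : ℕ, ∀ T : Finset (Fin n), T.card = t →
      (D.filter fun S => T ⊆ S.1).card = lam := by
  obtain ⟨a, rfl⟩ := Nat.exists_eq_add_of_le htk
  obtain ⟨T₀, hT₀⟩ := powersetCard_nonempty.2
    (show t ≤ (univ : Finset (Fin n)).card by simp; omega)
  refine ⟨(D.filter fun S => T₀ ⊆ S.1).card, fun T hT => ?_⟩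
  rw [mem_powersetCard_univ] at hT₀
  set g : Finset (Fin n) → ℝ := fun T' => (if T' = T then 1 else 0) - if T' = T₀ then 1 else 0
  have hg : g ∈ level t := fun T' hT' => by
    have hT'T : T' ≠ T := by rintro rfl; exact hT' hT
    have hT'T₀ : T' ≠ T₀ := by rintro rfl; exact hT' hT₀
    simp [g, hT'T, hT'T₀]
  have hg0 : ∑ T', g T' = 0 := by simp [g, sum_sub_distrib]
  have := sum_up_pow_eq_zero hkn h hg hg0
  rw [sum_up_pow_apply D Subtype.val fun S _ => S.2] at this
  simp [g, mul_sub, sum_sub_distrib, hT, hT₀, Nat.factorial_ne_zero, sub_eq_zero] at this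
  exact_mod_cast this

end Johnson

theorem t_design_iff_johnson_graphical_design_general
    (n k t : ℕ) (htk : t ≤ k) (hkn : 2 * k ≤ n)
    (D : Finset {S : Finset (Fin n) // S.card = k}) :
    (∃ lam : ℕ, ∀ T : Finset (Fin n), T.card = t →
        (D.filter fun S => T ⊆ S.1).card = lam) ↔
      (∀ μ : ℝ, 0 < μ → μ ≤ (t : ℝ) * ((n : ℝ) + 1 - (t : ℝ)) →
        ∀ φ : {S : Finset (Fin n) // S.card = k} → ℝ,
          (johnsonGraph n k).lapMatrix ℝ *ᵥ φ = μ • φ →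
          ∑ S ∈ D, φ S = 0) :=
  ⟨fun ⟨_, hD⟩ _ hμ hμt _ h => Johnson.sum_eq_zero_of_design htk hkn hD hμ hμt h,
    Johnson.exists_card_filter_eq_of_sum_eq_zero htk hkn⟩

/-- A family `D` of `k`-element subsets of `{1,…,n}` is a combinatorial `t`-design
(every `t`-element set lies in exactly `λ` members of `D`) if and only if `D` is a
`Φ_{[t]}`-design of the Johnson graph `J(n,k)`: it averages every Laplacian
eigenvector whose eigenvalue `μ` satisfies `0 < μ ≤ t(n+1−t)`. -/
theorem t_design_iff_johnson_graphical_design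
    (n k t : ℕ) (ht1 : 1 ≤ t) (htk : t ≤ k) (hkn : 2 * k ≤ n)
    (D : Finset {S : Finset (Fin n) // S.card = k}) :
    (∃ lam : ℕ, ∀ T : Finset (Fin n), T.card = t →
        (D.filter fun S => T ⊆ S.1).card = lam) ↔
      (∀ μ : ℝ, 0 < μ → μ ≤ (t : ℝ) * ((n : ℝ) + 1 - (t : ℝ)) →
        ∀ φ : {S : Finset (Fin n) // S.card = k} → ℝ,
          (johnsonGraph n k).lapMatrix ℝ *ᵥ φ = μ • φ →
          ∑ S ∈ D, φ S = 0) :=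
  t_design_iff_johnson_graphical_design_general n k t htk hkn D
end

section
/- Let 1 ≤ t < k and 2k ≤ n, and fix a t-element subset T of {1,…,n}. Let D_T be the set of all k-element subsets of {1,…,n} that contain T. Then ∑_{S∈D_T} φ(S) = 0 for every eigenvector φ of the graph Laplacian of the Johnson graph J(n,k) whose eigenvalue is strictly greater than t(n+1−t); that is, D_T averages all eigenvectors from the eigenspaces with eigenvalue λ_ℓ = ℓ(n+1−ℓ) for ℓ > t. -/
open Finset Matrix

/-!
Write `σ(T)` for the sum of `φ` over the `k`-sets containing `T`, and `t = #T`. Double counting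
the adjacent pairs `(S, W)` with `T ⊆ S` gives, for every `φ`,
`∑_{S ⊇ T} (Lφ)(S) = t(n+1-t) σ(T) - (k-t+1) ∑_{i ∈ T} σ(T \ {i})`,
because the number of such `S` adjacent to a given `W`, and the number of `i ∈ T` with
`T \ {i} ⊆ W`, both depend only on whether `T \ W` is empty, a singleton, or larger.
For an eigenvector with eigenvalue `μ`, induction on `t` makes the last sum vanish, since
`ℓ(n+1-ℓ)` increases as long as `2ℓ ≤ n + 2`; what remains is `(μ - t(n+1-t)) σ(T) = 0`.
-/

theorem Finset.sum_sum_filter_eq_sum_card_filter_mul {α β R : Type*} [Fintype β]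
    [NonAssocSemiring R] (A : Finset α) (P : α → β → Prop) [∀ a b, Decidable (P a b)]
    (f : β → R) :
    ∑ a ∈ A, ∑ b with P a b, f b = ∑ b, (#{a ∈ A | P a b} : R) * f b := by
  simp_rw [sum_filter]
  rw [sum_comm]
  refine sum_congr rfl fun b _ => ?_
  rw [← sum_filter, sum_const, nsmul_eq_mul]

theorem Finset.card_filter_subset_singleton {α : Type*} [DecidableEq α] {R X : Finset α}
    (h : R ⊆ X) : #{x ∈ X | R ⊆ {x}} = if R = ∅ then #X else if #R = 1 then 1 else 0 := by
  split_ifs with h0 h1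
  · simp [h0]
  · obtain ⟨c, rfl⟩ := card_eq_one.mp h1
    simp only [singleton_subset_singleton]
    rw [filter_eq, if_pos (h (mem_singleton_self c)), card_singleton]
  · rw [card_eq_zero, filter_eq_empty_iff]
    intro x _ hx
    have := card_le_card hx
    rw [card_singleton] at this
    have := card_pos.mpr (nonempty_iff_ne_empty.mpr h0)
    omega

theorem Finset.card_insert_erase_of_mem_of_notMem {α : Type*} [DecidableEq α] {W : Finset α}
    {a b : α} (ha : a ∈ W) (hb : b ∉ W) : #(insert b (W.erase a)) = #W := by
  rw [card_insert_of_notMem (fun h => hb (mem_of_mem_erase h)), card_erase_add_one ha]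

theorem Finset.insert_erase_injOn {α : Type*} [DecidableEq α] [Fintype α] (W : Finset α) :
    Set.InjOn (fun p : α × α => insert p.2 (W.erase p.1)) ↑(W ×ˢ Wᶜ) := by
  rintro ⟨a, b⟩ hab ⟨a', b'⟩ hab' h
  simp only [coe_product, Set.mem_prod, mem_coe, mem_compl] at hab hab' h
  simp only [Finset.ext_iff, mem_insert, mem_erase] at h
  have := h a; have := h b; have := h a'; have := h b'
  grind

theorem Finset.subset_insert_erase_iff {α : Type*} [DecidableEq α] {T W : Finset α} {a b : α}
    (ha : a ∈ W) (hb : b ∉ W) : T ⊆ insert b (W.erase a) ↔ a ∉ T ∧ T \ W ⊆ {b} := by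
  simp only [subset_iff, mem_insert, mem_erase, mem_sdiff, mem_singleton]
  grind

abbrev KSubset (n k : ℕ) : Type := {S : Finset (Fin n) // S.card = k}

section
variable {n k : ℕ}

theorem johnsonGraph_adj_iff {S W : KSubset n k} :
    (johnsonGraph n k).Adj S W ↔ ∃ a ∈ W.1, ∃ b ∉ W.1, S.1 = insert b (W.1.erase a) := by
  constructor
  · rintro ⟨hne, hinter⟩
    have hS := card_sdiff_add_card_inter S.1 W.1
    have hW := card_sdiff_add_card_inter W.1 S.1
    rw [inter_comm] at hW
    have hk : k ≠ 0 := by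
      rintro rfl
      exact hne (Subtype.ext ((card_eq_zero.mp S.2).trans (card_eq_zero.mp W.2).symm))
    obtain ⟨b, hb⟩ := card_eq_one.mp (show #(S.1 \ W.1) = 1 by rw [S.2] at hS; omega)
    obtain ⟨a, ha⟩ := card_eq_one.mp (show #(W.1 \ S.1) = 1 by rw [W.2] at hW; omega)
    simp only [Finset.ext_iff, mem_sdiff, mem_singleton] at ha hb
    refine ⟨a, ((ha a).mpr rfl).1, b, ((hb b).mpr rfl).2, ?_⟩
    ext x
    simp only [mem_insert, mem_erase]
    grind
  · rintro ⟨a, ha, b, hb, hS⟩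
    refine ⟨fun h => hb ?_, ?_⟩
    · rw [← h, hS]; exact mem_insert_self b _
    · rw [hS, insert_inter_of_notMem hb, inter_eq_left.mpr (erase_subset a _),
        card_erase_of_mem ha, W.2]

theorem johnsonGraph_card_filter_adj (W : KSubset n k) (P : Finset (Fin n) → Prop)
    [DecidablePred P] :
    #{S : KSubset n k | P S.1 ∧ (johnsonGraph n k).Adj S W}
      = #{p ∈ W.1 ×ˢ W.1ᶜ | P (insert p.2 (W.1.erase p.1))} := by
  symm
  refine card_bij (fun p hp => ⟨insert p.2 (W.1.erase p.1), ?_⟩) ?_ ?_ ?_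
  · simp only [mem_filter, mem_product, mem_compl] at hp
    rw [card_insert_erase_of_mem_of_notMem hp.1.1 hp.1.2, W.2]
  · intro p hp
    simp only [mem_filter, mem_product, mem_compl, mem_univ, true_and] at hp ⊢
    exact ⟨hp.2, johnsonGraph_adj_iff.mpr ⟨p.1, hp.1.1, p.2, hp.1.2, rfl⟩⟩
  · intro p hp q hq h
    exact insert_erase_injOn W.1 (mem_filter.mp hp).1 (mem_filter.mp hq).1
      (congrArg Subtype.val h)
  · intro S hS
    simp only [mem_filter, mem_univ, true_and] at hS
    obtain ⟨a, ha, b, hb, hSab⟩ := johnsonGraph_adj_iff.mp hS.2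
    refine ⟨(a, b), ?_, Subtype.ext hSab.symm⟩
    simp only [mem_filter, mem_product, mem_compl]
    exact ⟨⟨ha, hb⟩, hSab ▸ hS.1⟩

theorem johnsonGraph_degree (W : KSubset n k) : (johnsonGraph n k).degree W = k * (n - k) := by
  have h := johnsonGraph_card_filter_adj W fun _ => True
  rw [filter_true, card_product, card_compl, Fintype.card_fin, W.2] at h
  simp only [true_and] at h
  rw [← SimpleGraph.card_neighborFinset_eq_degree, SimpleGraph.neighborFinset_eq_filter, ← h]
  simp only [SimpleGraph.adj_comm]

theorem johnsonGraph_card_filter_supset_adj (T : Finset (Fin n)) (W : KSubset n k) :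
    #{S : KSubset n k | T ⊆ S.1 ∧ (johnsonGraph n k).Adj S W}
      = #(W.1 \ T) * #{b ∈ W.1ᶜ | T \ W.1 ⊆ {b}} := by
  rw [johnsonGraph_card_filter_adj, ← card_product, ← filter_notMem_eq_sdiff, ← filter_product]
  congr 1
  refine filter_congr fun p hp => ?_
  simp only [mem_product, mem_compl] at hp
  exact subset_insert_erase_iff hp.1 hp.2

theorem johnsonGraph_card_filter_supset_adj_eq_card_filter_erase (T : Finset (Fin n))
    (W : KSubset n k) :
    (#{S : KSubset n k | T ⊆ S.1 ∧ (johnsonGraph n k).Adj S W} : ℝ)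
      = (k - #T + 1) * #{i ∈ T | T.erase i ⊆ W.1}
        + if T ⊆ W.1 then (k * (n - k) - #T * (n + 1 - #T) : ℝ) else 0 := by
  have herase : #{i ∈ T | T.erase i ⊆ W.1} = #{i ∈ T | T \ W.1 ⊆ {i}} := by
    simp only [erase_eq, sdiff_le_comm]
  have hsizes : (#(W.1 \ T) : ℝ) + #T = #(T \ W.1) + k := by
    have h₁ := card_sdiff_add_card W.1 T
    have h₂ := card_sdiff_add_card T W.1
    rw [union_comm] at h₂
    have := W.2
    exact_mod_cast (show #(W.1 \ T) + #T = #(T \ W.1) + k by omega)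
  have hcompl : (#W.1ᶜ : ℝ) = n - k := by
    have := card_add_card_compl W.1
    rw [Fintype.card_fin, W.2] at this
    rw [eq_sub_iff_add_eq, add_comm]; exact_mod_cast this
  rw [johnsonGraph_card_filter_supset_adj, herase, card_filter_subset_singleton sdiff_subset,
    card_filter_subset_singleton fun x hx => mem_compl.mpr (mem_sdiff.mp hx).2]
  simp only [← sdiff_eq_empty_iff_subset]
  split_ifs with h₀ h₁ <;> push_cast [hcompl]
  · rw [h₀, card_empty] at hsizes
    linear_combination (↑n - ↑k) * hsizes
  · rw [h₁] at hsizes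
    linear_combination hsizes
  · ring

noncomputable def supersetSum (φ : KSubset n k → ℝ) (T : Finset (Fin n)) : ℝ :=
  ∑ S with T ⊆ S.1, φ S

theorem supersetSum_lapMatrix_mulVec (φ : KSubset n k → ℝ) (T : Finset (Fin n)) :
    supersetSum ((johnsonGraph n k).lapMatrix ℝ *ᵥ φ) T
      = #T * (n + 1 - #T) * supersetSum φ T
        - (k - #T + 1) * ∑ i ∈ T, supersetSum φ (T.erase i) := by
  have hdeg (S : KSubset n k) : ((johnsonGraph n k).degree S : ℝ) = k * (n - k) := by
    have : k ≤ n := S.2 ▸ card_le_univ S.1 |>.trans_eq (Fintype.card_fin n)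
    rw [johnsonGraph_degree]; push_cast [this]; ring
  have hself : supersetSum φ T = ∑ W, (if T ⊆ W.1 then 1 else 0) * φ W := by
    simp only [supersetSum, sum_filter, ite_mul, one_mul, zero_mul]
  have hneighbors : ∑ S with T ⊆ S.1, ∑ W ∈ (johnsonGraph n k).neighborFinset S, φ W
      = ∑ W, (#{S : KSubset n k | T ⊆ S.1 ∧ (johnsonGraph n k).Adj S W} : ℝ) * φ W := by
    simp only [SimpleGraph.neighborFinset_eq_filter, sum_sum_filter_eq_sum_card_filter_mul,
      filter_filter]
  have herased : ∑ i ∈ T, supersetSum φ (T.erase i)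
      = ∑ W, (#{i ∈ T | T.erase i ⊆ W.1} : ℝ) * φ W := by
    simp only [supersetSum, sum_sum_filter_eq_sum_card_filter_mul]
  have hlap : supersetSum ((johnsonGraph n k).lapMatrix ℝ *ᵥ φ) T
      = k * (n - k) * supersetSum φ T
        - ∑ S with T ⊆ S.1, ∑ W ∈ (johnsonGraph n k).neighborFinset S, φ W := by
    simp only [supersetSum, SimpleGraph.lapMatrix_mulVec_apply, hdeg, sum_sub_distrib, mul_sum]
  rw [hlap, hneighbors, herased, hself]
  simp only [mul_sum, ← sum_sub_distrib]
  refine sum_congr rfl fun W _ => ?_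
  rw [johnsonGraph_card_filter_supset_adj_eq_card_filter_erase]
  split_ifs <;> ring

theorem supersetSum_eq_zero_of_lapMatrix_mulVec_eq_smul {μ : ℝ} {φ : KSubset n k → ℝ}
    (hφ : (johnsonGraph n k).lapMatrix ℝ *ᵥ φ = μ • φ) (T : Finset (Fin n))
    (hTn : 2 * #T ≤ n + 2) (hμ : #T * (n + 1 - #T) < μ) : supersetSum φ T = 0 := by
  induction T using Finset.strongInduction with
  | H T ih =>
  have herased : ∀ i ∈ T, supersetSum φ (T.erase i) = 0 := by
    intro i hi
    have hcard : #(T.erase i) + 1 = #T := card_erase_add_one hi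
    refine ih _ (erase_ssubset hi) (by omega) ?_
    have hcard' : (#(T.erase i) : ℝ) = #T - 1 := by
      rw [eq_sub_iff_add_eq]; exact_mod_cast hcard
    have hTn' : (2 * #T : ℝ) ≤ n + 2 := by exact_mod_cast hTn
    rw [hcard']
    nlinarith
  have key := supersetSum_lapMatrix_mulVec φ T
  rw [hφ, sum_eq_zero herased, mul_zero, sub_zero] at key
  have hsmul : supersetSum (μ • φ) T = μ * supersetSum φ T := by
    simp only [supersetSum, Pi.smul_apply, smul_eq_mul, mul_sum]
  rw [hsmul] at key
  have hfactor : (μ - #T * (n + 1 - #T)) * supersetSum φ T = 0 := by linear_combination key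
  exact (mul_eq_zero.mp hfactor).resolve_left (sub_ne_zero.mpr hμ.ne')

end

theorem ekr_extremizer_is_reverse_design_general
    (n k t : ℕ) (htk : t < k) (hkn : 2 * k ≤ n)
    (T : Finset (Fin n)) (hT : T.card = t) :
    ∀ μ : ℝ, (t : ℝ) * ((n : ℝ) + 1 - (t : ℝ)) < μ →
      ∀ φ : {S : Finset (Fin n) // S.card = k} → ℝ,
        (johnsonGraph n k).lapMatrix ℝ *ᵥ φ = μ • φ →
        ∑ S ∈ Finset.univ.filter (fun S : {S : Finset (Fin n) // S.card = k} => T ⊆ S.1),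
          φ S = 0 := by
  intro μ hμ φ hφ
  subst hT
  exact supersetSum_eq_zero_of_lapMatrix_mulVec_eq_smul hφ T (by omega) hμ

/-- For a fixed `t`-element set `T ⊆ {1,…,n}`, the family `D_T` of all `k`-element
subsets containing `T` (the Erdős–Ko–Rado extremizer) averages every Laplacian
eigenvector of the Johnson graph `J(n,k)` whose eigenvalue exceeds `t(n+1−t)`. -/
theorem ekr_extremizer_is_reverse_design
    (n k t : ℕ) (ht1 : 1 ≤ t) (htk : t < k) (hkn : 2 * k ≤ n)
    (T : Finset (Fin n)) (hT : T.card = t) :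
    ∀ μ : ℝ, (t : ℝ) * ((n : ℝ) + 1 - (t : ℝ)) < μ →
      ∀ φ : {S : Finset (Fin n) // S.card = k} → ℝ,
        (johnsonGraph n k).lapMatrix ℝ *ᵥ φ = μ • φ →
        ∑ S ∈ Finset.univ.filter (fun S : {S : Finset (Fin n) // S.card = k} => T ⊆ S.1),
          φ S = 0 :=
  ekr_extremizer_is_reverse_design_general n k t htk hkn T hT
end

section
/- For every n ≥ 6 there exist partitions p and q of n — i.e. nonincreasing finite sequences p₁ ≥ p₂ ≥ … ≥ p_r ≥ 1 and q₁ ≥ q₂ ≥ … ≥ q_s ≥ 1 of positive integers with ∑_{i=1}^r p_i = ∑_{j=1}^s q_j = n — such that p₁ > q₁ and ∑_{i=1}^r p_i(p_i − 2i + 1) ≤ ∑_{j=1}^s q_j(q_j − 2j + 1). Equivalently, writing λ_p = C(n,2) − ½∑_i p_i(p_i − 2i + 1) for the Laplacian eigenvalue of the transposition graph on the eigenspace indexed by p, there exist p, q with p₁ > q₁ but λ_p ≥ λ_q, so the first part order on partitions does not agree with the Laplacian order of the transposition graph. -/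
/-!
Write `n = 2m + c` with `c ∈ {0, 1}` and `m ≥ 3`. The hook `p = (m + 1, 1, …, 1)` has a longer
first row than `q = (m, m, 1, …, 1)` (with `c` trailing ones), yet twice the content of `p` is
`2m(1 - c)`, at most that of `q`, which is `2m(m - 2) - 4c`.
-/

open Finset

/-- Twice the content `∑ (column − row)` of the Young diagram with row lengths `p`. -/
def doubleContent {r : ℕ} (p : Fin r → ℕ) : ℤ :=
  ∑ i, (p i : ℤ) * ((p i : ℤ) - 2 * ((i : ℤ) + 1) + 1)

structure IsPartitionOf (n : ℕ) {r : ℕ} (p : Fin r → ℕ) : Prop where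
  antitone : Antitone p
  one_le : ∀ i, 1 ≤ p i
  sum_eq : ∑ i, p i = n

def hook (a b : ℕ) : Fin (b + 1) → ℕ := Fin.cons a fun _ => 1

lemma doubleContent_cons {r : ℕ} (a : ℕ) (p : Fin r → ℕ) :
    doubleContent (Fin.cons a p : Fin (r + 1) → ℕ) =
      a * (a - 1) + doubleContent p - 2 * (∑ i, p i : ℕ) := by
  rw [doubleContent, Fin.sum_univ_succ, add_sub_assoc, doubleContent, Nat.cast_sum, mul_sum,
    ← sum_sub_distrib]
  simp only [Fin.cons_zero, Fin.cons_succ, Fin.val_zero, Fin.val_succ]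
  push_cast
  congr 1
  · ring
  · exact sum_congr rfl fun i _ => by ring

lemma doubleContent_const_one (b : ℕ) :
    doubleContent (fun _ : Fin b => 1) = -(b * (b - 1)) := by
  induction b with
  | zero => simp [doubleContent]
  | succ b ih =>
    rw [show (fun _ : Fin (b + 1) => 1) = Fin.cons 1 (fun _ : Fin b => 1) from
        funext (Fin.cases rfl fun _ => rfl), doubleContent_cons, ih, Fin.sum_const, smul_eq_mul,
      mul_one]
    push_cast
    ring

lemma doubleContent_hook (a b : ℕ) : doubleContent (hook a b) = a * (a - 1) - b * (b + 1) := by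
  rw [hook, doubleContent_cons, doubleContent_const_one, Fin.sum_const, smul_eq_mul, mul_one]
  ring

lemma antitone_cons {r a : ℕ} {p : Fin r → ℕ} (hp : Antitone p) (ha : ∀ i, p i ≤ a) :
    Antitone (Fin.cons a p : Fin (r + 1) → ℕ) := by
  intro i j hij
  induction j using Fin.cases with
  | zero => rw [Fin.le_zero_iff.mp hij]
  | succ j =>
    induction i using Fin.cases with
    | zero => exact ha j
    | succ i => exact hp (Fin.succ_le_succ_iff.mp hij)

lemma IsPartitionOf.cons {n r a : ℕ} {p : Fin r → ℕ} (hp : IsPartitionOf n p)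
    (ha : ∀ i, p i ≤ a) (h1 : 1 ≤ a) :
    IsPartitionOf (a + n) (Fin.cons a p : Fin (r + 1) → ℕ) where
  antitone := antitone_cons hp.antitone ha
  one_le := Fin.cases h1 hp.one_le
  sum_eq := by rw [Fin.sum_cons, hp.sum_eq]

lemma isPartitionOf_const_one (b : ℕ) : IsPartitionOf b (fun _ : Fin b => 1) where
  antitone := antitone_const
  one_le := fun _ => le_rfl
  sum_eq := by simp

lemma isPartitionOf_hook {a : ℕ} (b : ℕ) (ha : 1 ≤ a) : IsPartitionOf (a + b) (hook a b) :=
  (isPartitionOf_const_one b).cons (fun _ => ha) ha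

lemma hook_le {a b : ℕ} (ha : 1 ≤ a) (i : Fin (b + 1)) : hook a b i ≤ a :=
  Fin.cases le_rfl (fun _ => ha) i

lemma exists_isPartitionOf_head_lt_doubleContent_le {m c : ℕ} (hm : 3 ≤ m) (hc : c ≤ 1) :
    ∃ (r s : ℕ) (p : Fin (r + 1) → ℕ) (q : Fin (s + 1) → ℕ),
      IsPartitionOf (2 * m + c) p ∧ IsPartitionOf (2 * m + c) q ∧ q 0 < p 0 ∧
        doubleContent p ≤ doubleContent q := by
  have hm1 : 1 ≤ m := by omega
  have hhook := isPartitionOf_hook c hm1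
  have hq := hhook.cons (hook_le hm1) hm1
  have hp := isPartitionOf_hook (m + c - 1) (a := m + 1) (by omega)
  refine ⟨_, _, _, _, by convert hp using 1; omega, by convert hq using 1; omega, by simp [hook], ?_⟩
  rw [doubleContent_cons, doubleContent_hook, doubleContent_hook, hhook.sum_eq]
  have hcast : ((m + c - 1 : ℕ) : ℤ) = m + c - 1 := by omega
  rw [hcast]
  push_cast
  interval_cases c <;> nlinarith

/-- For every `n ≥ 6` there are partitions `p, q ⊢ n` (written as nonincreasing
sequences of positive integers `p 0 ≥ p 1 ≥ … ` summing to `n`) with `p₁ > q₁` but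
`∑ᵢ pᵢ(pᵢ − 2i + 1) ≤ ∑ⱼ qⱼ(qⱼ − 2j + 1)` (indices starting at 1), i.e.
`λ_p ≥ λ_q` for the Laplacian eigenvalues
`λ_p = C(n,2) − ½·∑ᵢ pᵢ(pᵢ − 2i + 1)` of the transposition graph: the first part
order on partitions does not agree with the Laplacian order. -/
theorem first_part_order_ne_laplacian_order (n : ℕ) (hn : 6 ≤ n) :
    ∃ (r s : ℕ) (hr : 0 < r) (hs : 0 < s) (p : Fin r → ℕ) (q : Fin s → ℕ),
      (∀ i j : Fin r, i ≤ j → p j ≤ p i) ∧ (∀ i, 1 ≤ p i) ∧ (∑ i, p i = n) ∧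
      (∀ i j : Fin s, i ≤ j → q j ≤ q i) ∧ (∀ j, 1 ≤ q j) ∧ (∑ j, q j = n) ∧
      q ⟨0, hs⟩ < p ⟨0, hr⟩ ∧
      (∑ i : Fin r, (p i : ℤ) * ((p i : ℤ) - 2 * ((i : ℤ) + 1) + 1)) ≤
        (∑ j : Fin s, (q j : ℤ) * ((q j : ℤ) - 2 * ((j : ℤ) + 1) + 1)) := by
  obtain ⟨r, s, p, q, hp, hq, hhead, hcontent⟩ :=
    exists_isPartitionOf_head_lt_doubleContent_le (m := n / 2) (c := n % 2) (by omega) (by omega)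
  rw [Nat.div_add_mod] at hp hq
  exact ⟨r + 1, s + 1, r.succ_pos, s.succ_pos, p, q, fun _ _ h => hp.antitone h, hp.one_le,
    hp.sum_eq, fun _ _ h => hq.antitone h, hq.one_le, hq.sum_eq, hhead, hcontent⟩
end

section
/- Let G be a finite simple graph on vertex set V with adjacency matrix A, and let x : V → ℝ satisfy A x = μ x and ∑_{v∈V} x(v) = 0. Let B be the adjacency matrix of the Mycielskian M(G), and define z : V ⊔ V' ⊔ {u} → ℝ by z(v) = x(v) for v ∈ V, z(v') = −φ̄·x(v) for v' ∈ V', and z(u) = 0. Then B z = (φμ)·z. Likewise the vector z' defined by z'(v) = x(v), z'(v') = −φ·x(v), z'(u) = 0 satisfies B z' = (φ̄μ)·z'. Moreover both z and z' are orthogonal to the all-ones vector on V(M(G)). -/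
open Finset Matrix


variable {V : Type*}

/-- Adjacency relation of the Mycielskian of `G`: vertex set `V ⊔ V' ⊔ {u}`,
with `v ~ w` for edges `vw` of `G`, `v ~ w'` and `v' ~ w` for edges `vw` of `G`,
and `u ~ v'` for every `v`. -/
def mycAdj (G : SimpleGraph V) : V ⊕ V ⊕ Unit → V ⊕ V ⊕ Unit → Prop
  | Sum.inl v, Sum.inl w => G.Adj v w
  | Sum.inl v, Sum.inr (Sum.inl w) => G.Adj v w
  | Sum.inr (Sum.inl v), Sum.inl w => G.Adj v w
  | Sum.inr (Sum.inl _), Sum.inr (Sum.inr _) => True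
  | Sum.inr (Sum.inr _), Sum.inr (Sum.inl _) => True
  | _, _ => False

/-- The Mycielskian of a simple graph `G`. -/
def mycielskian (G : SimpleGraph V) : SimpleGraph (V ⊕ V ⊕ Unit) where
  Adj := mycAdj G
  symm := ⟨by
    rintro (v | v | v) (w | w | w) h <;> simp only [mycAdj] at h ⊢ <;>
      first
        | exact G.adj_symm h
        | exact h
        | trivial⟩
  loopless := ⟨by
    rintro (v | v | v) h <;> simp only [mycAdj] at h <;>
      first
        | exact G.loopless.irrefl v h
        | exact h⟩

instance (G : SimpleGraph V) [DecidableRel G.Adj] : DecidableRel (mycielskian G).Adj :=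
  fun a b =>
    match a, b with
    | Sum.inl v, Sum.inl w => inferInstanceAs (Decidable (G.Adj v w))
    | Sum.inl v, Sum.inr (Sum.inl w) => inferInstanceAs (Decidable (G.Adj v w))
    | Sum.inl _, Sum.inr (Sum.inr _) => inferInstanceAs (Decidable False)
    | Sum.inr (Sum.inl v), Sum.inl w => inferInstanceAs (Decidable (G.Adj v w))
    | Sum.inr (Sum.inl _), Sum.inr (Sum.inl _) => inferInstanceAs (Decidable False)
    | Sum.inr (Sum.inl _), Sum.inr (Sum.inr _) => inferInstanceAs (Decidable True)
    | Sum.inr (Sum.inr _), Sum.inl _ => inferInstanceAs (Decidable False)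
    | Sum.inr (Sum.inr _), Sum.inr (Sum.inl _) => inferInstanceAs (Decidable True)
    | Sum.inr (Sum.inr _), Sum.inr (Sum.inr _) => inferInstanceAs (Decidable False)

theorem Matrix.sum_elim_dotProduct_sum_elim {m n R : Type*} [Fintype m] [Fintype n]
    [NonUnitalNonAssocSemiring R] (u x : m → R) (v y : n → R) :
    Sum.elim u v ⬝ᵥ Sum.elim x y = u ⬝ᵥ x + v ⬝ᵥ y := by
  simp [dotProduct, Fintype.sum_sum_type]

namespace SimpleGraph

variable {V R : Type*} (G : SimpleGraph V) [DecidableRel G.Adj]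

section Rows

variable [NonAssocSemiring R]

theorem mycielskian_adjMatrix_inl (v : V) :
    (mycielskian G).adjMatrix R (.inl v) =
      Sum.elim (G.adjMatrix R v) (Sum.elim (G.adjMatrix R v) 0) := by
  funext w; rcases w with w | w | u <;> rfl

theorem mycielskian_adjMatrix_inr_inl (v : V) :
    (mycielskian G).adjMatrix R (.inr (.inl v)) =
      Sum.elim (G.adjMatrix R v) (Sum.elim 0 (1 : Unit → R)) := by
  funext w; rcases w with w | w | u <;> rfl

theorem mycielskian_adjMatrix_inr_inr (u : Unit) :
    (mycielskian G).adjMatrix R (.inr (.inr u)) = Sum.elim (0 : V → R) (Sum.elim 1 0) := by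
  funext w; rcases w with w | w | u <;> rfl

theorem mycielskian_adjMatrix_mulVec [Fintype V] (x y : V → R) (t : Unit → R) :
    (mycielskian G).adjMatrix R *ᵥ Sum.elim x (Sum.elim y t) =
      Sum.elim (G.adjMatrix R *ᵥ (x + y))
        (Sum.elim (G.adjMatrix R *ᵥ x + fun _ => t ()) fun _ => ∑ v, y v) := by
  funext c
  rcases c with v | v | u <;>
    simp only [mulVec, mycielskian_adjMatrix_inl, mycielskian_adjMatrix_inr_inl,
      mycielskian_adjMatrix_inr_inr, Matrix.sum_elim_dotProduct_sum_elim, Sum.elim_inl,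
      Sum.elim_inr, Pi.add_apply, dotProduct_add, zero_dotProduct, one_dotProduct,
      Fintype.sum_unique, add_zero, zero_add]

end Rows

/-- `a, b` are the roots of `X² - X - 1`: the rows of `V` give `(1 - b) μ = a μ`, those of `V'`
give `μ = a (-b) μ`, and the apex row sees `∑ x = 0`. -/
theorem mycielskian_adjMatrix_mulVec_eq_smul [Fintype V] [CommRing R] {μ a b : R}
    (hadd : a + b = 1) (hmul : a * b = -1) {x : V → R} (hx : G.adjMatrix R *ᵥ x = μ • x)
    (hsum : ∑ v, x v = 0) :
    (mycielskian G).adjMatrix R *ᵥ Sum.elim x (Sum.elim (-b • x) 0) =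
      (a * μ) • Sum.elim x (Sum.elim (-b • x) 0) := by
  rw [mycielskian_adjMatrix_mulVec]
  funext c
  rcases c with v | v | u
  · simp only [mulVec_add, mulVec_smul, hx, Sum.elim_inl, Pi.add_apply, Pi.smul_apply,
      smul_eq_mul]
    linear_combination (-(μ * x v)) * hadd
  · simp only [hx, Sum.elim_inl, Sum.elim_inr, Pi.add_apply, Pi.smul_apply, smul_eq_mul,
      Pi.zero_apply, add_zero]
    linear_combination (μ * x v) * hmul
  · simp [← Finset.mul_sum, hsum]

end SimpleGraph

theorem mycielskian_eigenvectors_general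
    {V : Type*} [Fintype V] (G : SimpleGraph V) [DecidableRel G.Adj]
    (μ : ℝ) (x : V → ℝ)
    (hx : G.adjMatrix ℝ *ᵥ x = μ • x) (hsum : ∑ v, x v = 0)
    (z z' : V ⊕ V ⊕ Unit → ℝ)
    (hz : z = Sum.elim x (Sum.elim (fun v => -Real.goldenConj * x v) fun _ => 0))
    (hz' : z' = Sum.elim x (Sum.elim (fun v => -Real.goldenRatio * x v) fun _ => 0)) :
    (mycielskian G).adjMatrix ℝ *ᵥ z = (Real.goldenRatio * μ) • z ∧
    (mycielskian G).adjMatrix ℝ *ᵥ z' = (Real.goldenConj * μ) • z' ∧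
    ∑ w, z w * 1 = 0 ∧ ∑ w, z' w * 1 = 0 := by
  subst hz hz'
  have sum_eq_zero (c : ℝ) :
      ∑ w : V ⊕ V ⊕ Unit, Sum.elim x (Sum.elim (fun v => c * x v) fun _ => 0) w * 1 = 0 := by
    simp [Fintype.sum_sum_type, ← Finset.mul_sum, hsum]
  exact ⟨G.mycielskian_adjMatrix_mulVec_eq_smul Real.goldenRatio_add_goldenConj
      Real.goldenRatio_mul_goldenConj hx hsum,
    G.mycielskian_adjMatrix_mulVec_eq_smul ((add_comm _ _).trans Real.goldenRatio_add_goldenConj)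
      ((mul_comm _ _).trans Real.goldenRatio_mul_goldenConj) hx hsum,
    sum_eq_zero _, sum_eq_zero _⟩

/-- If `x` is an eigenvector of `A(G)` with eigenvalue `μ` summing to zero, then
`z = (x, −φ̄x, 0)` and `z' = (x, −φx, 0)` are eigenvectors of the adjacency matrix of
the Mycielskian `M(G)` with eigenvalues `φμ` and `φ̄μ` respectively (where
`φ = (1+√5)/2` and `φ̄ = (1−√5)/2` are the roots of `x² − x − 1`), and both are
orthogonal to the all-ones vector. -/
theorem mycielskian_eigenvectors
    {V : Type*} [Fintype V] [DecidableEq V] (G : SimpleGraph V) [DecidableRel G.Adj]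
    (μ : ℝ) (x : V → ℝ)
    (hx : G.adjMatrix ℝ *ᵥ x = μ • x) (hsum : ∑ v, x v = 0)
    (z z' : V ⊕ V ⊕ Unit → ℝ)
    (hz : z = Sum.elim x (Sum.elim (fun v => -Real.goldenConj * x v) fun _ => 0))
    (hz' : z' = Sum.elim x (Sum.elim (fun v => -Real.goldenRatio * x v) fun _ => 0)) :
    (mycielskian G).adjMatrix ℝ *ᵥ z = (Real.goldenRatio * μ) • z ∧
    (mycielskian G).adjMatrix ℝ *ᵥ z' = (Real.goldenConj * μ) • z' ∧
    ∑ w, z w * 1 = 0 ∧ ∑ w, z' w * 1 = 0 :=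
  mycielskian_eigenvectors_general G μ x hx hsum z z' hz hz'
end
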